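/- arXiv:2106.06562 — 5 statements merged into one kernel-verified Lean document; each statement's English description precedes it below -/
import Mathlib

section
/- For integers m ≥ 1 and n ≥ 2, let Q(m,n) be the graph obtained from the complete graph K_m by identifying each of its m vertices with one vertex of its own disjoint copy of K_n. Then the Mostar index of Q(m,n) equals m·n·(m−1)·(n−1). -/
open Finset

section MostarDefs

variable {V : Type*}

/-- Number of vertices of `G` strictly closer to `u` than to `v`. -/
noncomputable def closerCount (G : SimpleGraph V) (u v : V) : ℕ :=
  Nat.card {w : V // G.dist w u < G.dist w v}

/-- Contribution `|n_u - n_v|` of an edge, as a symmetric function on `Sym2 V`. -/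
noncomputable def mostarTerm (G : SimpleGraph V) : Sym2 V → ℕ :=
  Sym2.lift ⟨fun u v => ((closerCount G u v : ℤ) - closerCount G v u).natAbs,
    fun u v => by dsimp only; omega⟩

/-- The Mostar index of a finite graph. -/
noncomputable def mostar (G : SimpleGraph V) [Finite V] : ℕ :=
  letI := Fintype.ofFinite V
  letI := Classical.decEq V
  letI := Classical.decRel G.Adj
  ∑ e ∈ G.edgeFinset, mostarTerm G e

/-- Distance from a vertex `w` to an edge, as min over the endpoints. -/
noncomputable def vertexEdgeDist (G : SimpleGraph V) (w : V) : Sym2 V → ℕ :=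
  Sym2.lift ⟨fun x y => min (G.dist x w) (G.dist y w), fun _ _ => min_comm _ _⟩

/-- Number of edges of `G` strictly closer to `u` than to `v`. -/
noncomputable def edgeCloserCount (G : SimpleGraph V) (u v : V) : ℕ :=
  Nat.card {e : Sym2 V // e ∈ G.edgeSet ∧ vertexEdgeDist G u e < vertexEdgeDist G v e}

/-- Contribution `|m_u - m_v|` of an edge, as a symmetric function on `Sym2 V`. -/
noncomputable def emostarTerm (G : SimpleGraph V) : Sym2 V → ℕ :=
  Sym2.lift ⟨fun u v => ((edgeCloserCount G u v : ℤ) - edgeCloserCount G v u).natAbs,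
    fun u v => by dsimp only; omega⟩

/-- The edge Mostar index of a finite graph. -/
noncomputable def emostar (G : SimpleGraph V) [Finite V] : ℕ :=
  letI := Fintype.ofFinite V
  letI := Classical.decEq V
  letI := Classical.decRel G.Adj
  ∑ e ∈ G.edgeFinset, emostarTerm G e

end MostarDefs

/-- `Q(m,n)`: the complete graph `K_m`, each of whose vertices is identified with a
vertex of its own disjoint copy of `K_n`.  Vertex `(i, 0)` is the `i`-th hub vertex. -/
def Qgraph (m n : ℕ) : SimpleGraph (Fin m × Fin n) where
  Adj p q := (p.1 = q.1 ∧ p.2 ≠ q.2) ∨ (p.2.val = 0 ∧ q.2.val = 0 ∧ p.1 ≠ q.1)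
  symm := by
    refine ⟨?_⟩
    rintro p q (⟨h1, h2⟩ | ⟨h1, h2, h3⟩)
    · exact Or.inl ⟨h1.symm, h2.symm⟩
    · exact Or.inr ⟨h2, h1, h3.symm⟩
  loopless := ⟨by rintro p (⟨_, h⟩ | ⟨_, _, h⟩) <;> exact h rfl⟩

/-!
Every edge of `Q(m,n)` other than a spoke, joining a hub `(i, 0)` to a vertex `(i, j)` of its
own clique, is reversed by an automorphism (a transposition of two cliques, or of two non-hub
positions), so it contributes `0`. Between different cliques the distance is `1` plus the number
of endpoints that are not hubs. Hence for a spoke only `(i, j)` itself is closer to `(i, j)`,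
while the hub and the `(m - 1) n` vertices outside clique `i` are closer to the hub: each of the
`m (n - 1)` spokes contributes `(m - 1) n`.
-/

open SimpleGraph

namespace SimpleGraph

variable {V W : Type*} {G : SimpleGraph V} {G' : SimpleGraph W}

theorem edist_map_le (f : G →g G') (u v : V) : G'.edist (f u) (f v) ≤ G.edist u v := by
  by_cases hr : G.Reachable u v
  · obtain ⟨p, hp⟩ := hr.exists_walk_length_eq_edist
    rw [← hp, ← Walk.length_map f]
    exact edist_le _
  · exact edist_eq_top_of_not_reachable hr ▸ le_top

theorem Iso.dist_eq (φ : G ≃g G') (u v : V) : G'.dist (φ u) (φ v) = G.dist u v := by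
  have h := edist_map_le φ.symm.toHom (φ u) (φ v)
  simp only [RelIso.coe_toRelEmbedding, RelEmbedding.coe_toRelHom, RelIso.symm_apply_apply] at h
  exact congrArg ENat.toNat (le_antisymm (edist_map_le φ.toHom u v) h)

section Potential

variable {d : V → ℕ} {z : V}

theorem le_length_of_adj_le (hle : ∀ x y, G.Adj x y → d x ≤ d y + 1) (hz : d z = 0) {x : V}
    (p : G.Walk x z) : d x ≤ p.length := by
  induction p with
  | nil => simp [hz]
  | cons h p ih => exact (hle _ _ h).trans (by simp only [Walk.length_cons]; omega)

theorem exists_walk_length_le_of_exists_adj (hex : ∀ x, x ≠ z → ∃ y, G.Adj x y ∧ d x = d y + 1)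
    (x : V) : ∃ p : G.Walk x z, p.length ≤ d x := by
  induction hx : d x using Nat.strong_induction_on generalizing x with
  | _ k ih =>
    by_cases hxz : x = z
    · subst hxz
      exact ⟨.nil, by simp⟩
    · obtain ⟨y, hxy, hdy⟩ := hex x hxz
      obtain ⟨p, hp⟩ := ih (d y) (by omega) y rfl
      exact ⟨.cons hxy p, by simp only [Walk.length_cons]; omega⟩

theorem dist_eq_of_adj_le_of_exists_adj (hle : ∀ x y, G.Adj x y → d x ≤ d y + 1) (hz : d z = 0)
    (hex : ∀ x, x ≠ z → ∃ y, G.Adj x y ∧ d x = d y + 1) (x : V) : G.dist x z = d x := by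
  obtain ⟨p, hp⟩ := exists_walk_length_le_of_exists_adj hex x
  obtain ⟨q, hq⟩ := Reachable.exists_walk_length_eq_dist ⟨p⟩
  exact le_antisymm ((dist_le p).trans hp) (hq ▸ le_length_of_adj_le hle hz q)

end Potential

end SimpleGraph

section Mostar

variable {V W : Type*} {G : SimpleGraph V} {G' : SimpleGraph W}

theorem mostar_eq_sum [Fintype V] [Fintype G.edgeSet] :
    mostar G = ∑ e ∈ G.edgeFinset, mostarTerm G e := by
  unfold mostar
  exact Finset.sum_congr (by ext; simp) fun _ _ => rfl

theorem mostarTerm_mk (u v : V) :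
    mostarTerm G s(u, v) = ((closerCount G u v : ℤ) - closerCount G v u).natAbs := rfl

theorem closerCount_eq_card [Fintype V] (u v : V) :
    closerCount G u v = #{w | G.dist w u < G.dist w v} := by
  rw [closerCount, Nat.card_eq_fintype_card, Fintype.card_subtype]

theorem SimpleGraph.Iso.closerCount_eq (φ : G ≃g G') (u v : V) :
    closerCount G' (φ u) (φ v) = closerCount G u v :=
  Nat.card_congr (φ.toEquiv.subtypeEquiv fun w => by simp [φ.dist_eq]).symm

theorem mostarTerm_eq_zero_of_iso_swap (φ : G ≃g G) {u v : V} (hu : φ u = v) (hv : φ v = u) :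
    mostarTerm G s(u, v) = 0 := by
  have h := φ.closerCount_eq u v
  rw [hu, hv] at h
  simp [mostarTerm_mk, h]

end Mostar

namespace Qgraph

variable {m n : ℕ}

theorem swap_val_eq_zero_iff {j k : Fin n} (hj : j.val ≠ 0) (hk : k.val ≠ 0) (l : Fin n) :
    (Equiv.swap j k l).val = 0 ↔ l.val = 0 := by
  rw [Equiv.swap_apply_def]
  split_ifs <;> subst_vars <;> simp [hj, hk]

def prodCongr (σ : Equiv.Perm (Fin m)) (τ : Equiv.Perm (Fin n))
    (hτ : ∀ j, (τ j).val = 0 ↔ j.val = 0) : Qgraph m n ≃g Qgraph m n where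
  toEquiv := σ.prodCongr τ
  map_rel_iff' := by
    rintro ⟨a, b⟩ ⟨c, d⟩
    simp [Qgraph, hτ]

def spokes [NeZero n] : Finset (Sym2 (Fin m × Fin n)) :=
  (univ ×ˢ univ.erase 0).image fun p => s((p.1, 0), p)

theorem mk_mem_spokes [NeZero n] (i : Fin m) {j : Fin n} (hj : j ≠ 0) :
    s((i, 0), (i, j)) ∈ (spokes : Finset (Sym2 (Fin m × Fin n))) :=
  mem_image.mpr ⟨(i, j), by simp [hj], rfl⟩

theorem spokes_subset_edgeFinset [NeZero n] [Fintype (Qgraph m n).edgeSet] :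
    spokes ⊆ (Qgraph m n).edgeFinset := by
  simp only [spokes, image_subset_iff, mem_product, mem_erase, mem_edgeFinset, mem_edgeSet]
  rintro ⟨i, j⟩ ⟨-, hj, -⟩
  exact Or.inl ⟨rfl, Ne.symm hj⟩

theorem card_spokes [NeZero n] : (spokes : Finset (Sym2 (Fin m × Fin n))).card = m * (n - 1) := by
  rw [spokes, card_image_of_injOn, card_product, card_erase_of_mem (mem_univ 0)]
  · simp
  rintro ⟨i, j⟩ hj ⟨i', j'⟩ hj' h
  simp only [coe_product, Set.mem_prod, mem_coe, mem_erase, Sym2.eq_iff, Prod.ext_iff] at hj hj' h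
  grind

theorem mostarTerm_eq_zero_of_notMem_spokes [NeZero n] {e : Sym2 (Fin m × Fin n)}
    (he : e ∈ (Qgraph m n).edgeSet) (hs : e ∉ spokes) : mostarTerm (Qgraph m n) e = 0 := by
  induction e using Sym2.ind with
  | _ u v =>
    rcases he with ⟨h₁, h₂⟩ | ⟨hu, hv, h₁⟩
    · by_cases hu : u.2 = 0
      · refine absurd ?_ hs
        rw [show u = (v.1, 0) from Prod.ext h₁ hu]
        exact mk_mem_spokes v.1 (hu ▸ h₂.symm)
      by_cases hv : v.2 = 0
      · refine absurd ?_ hs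
        rw [Sym2.eq_swap, show v = (u.1, 0) from Prod.ext h₁.symm hv]
        exact mk_mem_spokes u.1 (hv ▸ h₂)
      refine mostarTerm_eq_zero_of_iso_swap
        (prodCongr 1 (Equiv.swap u.2 v.2) (swap_val_eq_zero_iff (by simpa) (by simpa))) ?_ ?_
      · exact Prod.ext h₁ (Equiv.swap_apply_left _ _)
      · exact Prod.ext h₁.symm (Equiv.swap_apply_right _ _)
    · have h₂ : u.2 = v.2 := Fin.ext (hu.trans hv.symm)
      refine mostarTerm_eq_zero_of_iso_swap
        (prodCongr (Equiv.swap u.1 v.1) 1 fun _ => Iff.rfl) ?_ ?_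
      · exact Prod.ext (Equiv.swap_apply_left _ _) h₂
      · exact Prod.ext (Equiv.swap_apply_right _ _) h₂.symm

def hubDist (p : Fin m × Fin n) : ℕ := if p.2.val = 0 then 0 else 1

def qdist (p q : Fin m × Fin n) : ℕ :=
  if p = q then 0 else if p.1 = q.1 then 1 else hubDist p + 1 + hubDist q

theorem qdist_adj_le {p p' : Fin m × Fin n} (h : (Qgraph m n).Adj p p') (q : Fin m × Fin n) :
    qdist p q ≤ qdist p' q + 1 := by
  obtain ⟨a, b⟩ := p
  obtain ⟨a', b'⟩ := p'
  obtain ⟨c, d⟩ := q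
  simp only [Qgraph] at h
  simp only [qdist, hubDist, Prod.mk.injEq]
  split_ifs <;> omega

theorem exists_adj_qdist_eq [NeZero n] {p q : Fin m × Fin n} (hpq : p ≠ q) :
    ∃ p', (Qgraph m n).Adj p p' ∧ qdist p q = qdist p' q + 1 := by
  by_cases h₁ : p.1 = q.1
  · refine ⟨q, Or.inl ⟨h₁, fun h₂ => hpq (Prod.ext h₁ h₂)⟩, ?_⟩
    simp [qdist, hpq, h₁]
  by_cases h₂ : p.2.val = 0
  · refine ⟨(q.1, 0), Or.inr ⟨h₂, rfl, h₁⟩, ?_⟩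
    simp only [qdist, hubDist, Prod.ext_iff]
    split_ifs <;> simp_all
  · refine ⟨(p.1, 0), Or.inl ⟨rfl, fun h => h₂ (by simp [h])⟩, ?_⟩
    simp only [qdist, hubDist, Prod.ext_iff]
    split_ifs <;> simp_all

theorem dist_eq_qdist [NeZero n] (p q : Fin m × Fin n) : (Qgraph m n).dist p q = qdist p q :=
  dist_eq_of_adj_le_of_exists_adj (fun _ _ h => qdist_adj_le h q) (by simp [qdist])
    (fun _ => exists_adj_qdist_eq) p

theorem closerCount_leaf_hub [NeZero n] (i : Fin m) {j : Fin n} (hj : j ≠ 0) :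
    closerCount (Qgraph m n) (i, j) (i, 0) = 1 := by
  rw [closerCount_eq_card, card_eq_one]
  refine ⟨(i, j), ?_⟩
  ext ⟨a, b⟩
  simp only [mem_filter, mem_univ, true_and, mem_singleton, dist_eq_qdist, qdist, hubDist,
    Prod.ext_iff]
  split_ifs <;> simp_all

theorem closerCount_hub_leaf [NeZero n] (i : Fin m) {j : Fin n} (hj : j ≠ 0) :
    closerCount (Qgraph m n) (i, 0) (i, j) = (m - 1) * n + 1 := by
  have hcloser : ({w | (Qgraph m n).dist w (i, 0) < (Qgraph m n).dist w (i, j)} : Finset _) =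
      insert (i, 0) ((univ.erase i) ×ˢ univ) := by
    ext ⟨a, b⟩
    simp only [mem_filter, mem_univ, true_and, mem_insert, mem_product, mem_erase,
      dist_eq_qdist, qdist, hubDist, Prod.ext_iff]
    split_ifs <;> simp_all
  rw [closerCount_eq_card, hcloser, card_insert_of_notMem (by simp), card_product,
    card_erase_of_mem (mem_univ i)]
  simp

theorem mostarTerm_of_mem_spokes [NeZero n] {e : Sym2 (Fin m × Fin n)} (he : e ∈ spokes) :
    mostarTerm (Qgraph m n) e = (m - 1) * n := by
  simp only [spokes, mem_image, mem_product, mem_erase] at he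
  obtain ⟨⟨i, j⟩, ⟨-, hj, -⟩, rfl⟩ := he
  rw [mostarTerm_mk, closerCount_hub_leaf i hj, closerCount_leaf_hub i hj]
  omega

end Qgraph

theorem mostar_Qgraph_general (m n : ℕ) :
    mostar (Qgraph m n) = m * n * (m - 1) * (n - 1) := by
  classical
  rcases n with _ | n
  · simp [mostar_eq_sum]
  rw [mostar_eq_sum, ← sum_subset Qgraph.spokes_subset_edgeFinset fun e he hs =>
      Qgraph.mostarTerm_eq_zero_of_notMem_spokes (mem_edgeFinset.mp he) hs,
    sum_const_nat fun _ => Qgraph.mostarTerm_of_mem_spokes, Qgraph.card_spokes]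
  ring

theorem mostar_Qgraph (m n : ℕ) (hm : 1 ≤ m) (hn : 2 ≤ n) :
    mostar (Qgraph m n) = m * n * (m - 1) * (n - 1) :=
  mostar_Qgraph_general m n
end

section
/- Let G be the link of pairwise disjoint connected graphs G_1, …, G_n with respect to vertices x_i, y_i ∈ V(G_i): G is obtained by joining y_i to x_{i+1} by a new edge for i = 1, …, n−1. Then Mo(G) ≤ Σ_{i=1}^{n} Mo(G_i) + Σ_{i=1}^{n} |E(G_i)|·(|V(G)| − |V(G_i)|) + Σ_{i=1}^{n−1} | Σ_{t=1}^{i} |V(G_t)| − Σ_{t=i+1}^{n} |V(G_t)| |. -/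
open Finset

/-- The link of the graphs `G 0, …, G (n-1)` with respect to the vertices `x i, y i`:
the disjoint union of the `G i` together with the new edges `y i — x (i+1)`. -/
def linkGraph (n : ℕ) (V : ℕ → Type*) (G : ∀ i, SimpleGraph (V i)) (x y : ∀ i, V i) :
    SimpleGraph ((i : Fin n) × V i.val) where
  Adj p q :=
    (∃ (i : Fin n) (a b : V i.val), (G i.val).Adj a b ∧ p = ⟨i, a⟩ ∧ q = ⟨i, b⟩) ∨
    (∃ (i j : Fin n), j.val = i.val + 1 ∧
      ((p = ⟨i, y i.val⟩ ∧ q = ⟨j, x j.val⟩) ∨ (p = ⟨j, x j.val⟩ ∧ q = ⟨i, y i.val⟩)))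
  symm := by
    constructor
    rintro p q (⟨i, a, b, h, rfl, rfl⟩ | ⟨i, j, hj, (⟨rfl, rfl⟩ | ⟨rfl, rfl⟩)⟩)
    · exact Or.inl ⟨i, b, a, h.symm, rfl, rfl⟩
    · exact Or.inr ⟨i, j, hj, Or.inr ⟨rfl, rfl⟩⟩
    · exact Or.inr ⟨i, j, hj, Or.inl ⟨rfl, rfl⟩⟩
  loopless := by
    constructor
    rintro p (⟨i, a, b, h, rfl, hab⟩ | ⟨i, j, hj, (⟨rfl, hab⟩ | ⟨rfl, hab⟩)⟩)
    · obtain ⟨rfl⟩ : a = b := by simpa using hab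
      exact (G i.val).irrefl h
    · have : i = j := congrArg Sigma.fst hab
      omega
    · have : j = i := congrArg Sigma.fst hab
      omega

/-!
An edge inside a piece `G i` separates the vertices of `G i` exactly as in `G i`, because `G i`
sits isometrically in the link: collapsing all earlier pieces onto `x i` and all later ones onto
`y i` maps edges to edges or vertices, so it cannot shorten walks. The remaining
`|V(G)| - |V(G i)|` vertices can change `|n_u - n_v|` by at most their number. A bridge
`y k — x (k+1)` is the only edge between the pieces `≤ k` and the pieces `> k`, so a vertex lies
strictly closer to `y k` exactly when it belongs to a piece `≤ k`.
-/

namespace SimpleGraph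

variable {W W' : Type*} {G : SimpleGraph W} {H : SimpleGraph W'}

lemma mostarTerm_mk (u v : W) :
    mostarTerm G s(u, v) = ((closerCount G u v : ℤ) - closerCount G v u).natAbs :=
  rfl

lemma closerCount_eq_ncard (u v : W) :
    closerCount G u v = {w | G.dist w u < G.dist w v}.ncard :=
  rfl

lemma dist_apply_le_of_adj_or_eq (f : W → W')
    (hf : ∀ a b, G.Adj a b → f a = f b ∨ H.Adj (f a) (f b)) {u v : W} (huv : G.Reachable u v) :
    H.dist (f u) (f v) ≤ G.dist u v := by
  obtain ⟨p, hp⟩ := huv.exists_walk_length_eq_dist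
  suffices ∀ {u v : W} (p : G.Walk u v), ∃ q : H.Walk (f u) (f v), q.length ≤ p.length by
    obtain ⟨q, hq⟩ := this p
    exact hp ▸ (dist_le q).trans hq
  intro u v p
  induction p with
  | nil => exact ⟨Walk.nil, le_rfl⟩
  | cons h p ih =>
    obtain ⟨q, hq⟩ := ih
    rcases hf _ _ h with heq | hadj
    · exact ⟨q.copy heq.symm rfl, by simp; omega⟩
    · exact ⟨Walk.cons hadj q, by simpa using hq⟩

section Cut

variable {S : Set W} {u v : W}

/- A shortest walk from `w ∈ S` to `v ∉ S` leaves `S` along a dart starting at `u`, so it passes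
through `u` before reaching `v`. -/
lemma dist_eq_dist_add_one_of_cut (hG : G.Preconnected) (huv : G.Adj u v) (hv : v ∉ S)
    (hS : ∀ a b, G.Adj a b → a ∈ S → b ∉ S → a = u) {w : W} (hw : w ∈ S) :
    G.dist w v = G.dist w u + 1 := by
  apply le_antisymm
  · simpa [dist_eq_one_iff_adj.mpr huv] using huv.reachable.dist_triangle_right w
  obtain ⟨p, hp⟩ := (hG w v).exists_walk_length_eq_dist
  obtain ⟨d, hd, hdS, hdS'⟩ := p.exists_boundary_dart S hw hv
  have hu : u ∈ p.support := hS _ _ d.adj hdS hdS' ▸ p.dart_fst_mem_support_of_mem_darts hd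
  obtain ⟨q, r, rfl⟩ := Walk.mem_support_iff_exists_append.mp hu
  have hr : r.length ≠ 0 := fun h => huv.ne (r.eq_of_length_eq_zero h)
  have hq := dist_le q
  rw [Walk.length_append] at hp
  omega

variable (hG : G.Preconnected) (huv : G.Adj u v) (hu : u ∈ S) (hv : v ∉ S)
  (hS : ∀ a b, G.Adj a b → a ∈ S → b ∉ S → a = u ∧ b = v)
include hG huv hu hv hS

lemma closerCount_eq_card_of_cut : closerCount G u v = Nat.card S := by
  refine Nat.card_congr (Equiv.subtypeEquivRight fun w => ?_)
  by_cases hw : w ∈ S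
  · have := dist_eq_dist_add_one_of_cut hG huv hv (fun a b h ha hb => (hS a b h ha hb).1) hw
    simp only [hw, iff_true]
    omega
  · have := dist_eq_dist_add_one_of_cut (S := Sᶜ) hG huv.symm (by simpa using hu)
      (fun a b h ha hb => (hS b a h.symm (by simpa using hb) ha).2) hw
    simp only [hw, iff_false]
    omega

lemma mostarTerm_eq_of_cut :
    mostarTerm G s(u, v) = ((Nat.card S : ℤ) - Nat.card ↥Sᶜ).natAbs := by
  rw [mostarTerm_mk, closerCount_eq_card_of_cut hG huv hu hv hS,
    closerCount_eq_card_of_cut (S := Sᶜ) hG huv.symm (by simpa using hv) (by simpa using hu)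
      (fun a b h ha hb => (hS b a h.symm (by simpa using hb) ha).symm)]

end Cut

section Isometry

variable {f : W' → W} (hdist : ∀ a b, G.dist (f a) (f b) = H.dist a b)
include hdist

lemma image_closerSet_of_isometry (a b : W') :
    f '' {c | H.dist c a < H.dist c b} =
      {w | G.dist w (f a) < G.dist w (f b)} ∩ Set.range f := by
  ext w
  constructor
  · rintro ⟨c, hc, rfl⟩
    exact ⟨by simpa [hdist] using hc, c, rfl⟩
  · rintro ⟨hw, c, rfl⟩
    exact ⟨c, by simpa [hdist] using hw, rfl⟩

variable [Finite W] (hf : Function.Injective f)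
include hf

lemma closerCount_le_closerCount_of_isometry (a b : W') :
    closerCount H a b ≤ closerCount G (f a) (f b) := by
  rw [closerCount_eq_ncard, closerCount_eq_ncard, ← Set.ncard_image_of_injective _ hf,
    image_closerSet_of_isometry hdist]
  exact Set.ncard_le_ncard Set.inter_subset_left

lemma closerCount_le_closerCount_add_of_isometry (a b : W') :
    closerCount G (f a) (f b) ≤ closerCount H a b + (Nat.card W - Nat.card W') := by
  rw [closerCount_eq_ncard, closerCount_eq_ncard, ← Set.ncard_image_of_injective _ hf,
    image_closerSet_of_isometry hdist, ← Set.ncard_range_of_injective hf, ← Set.ncard_compl]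
  refine (Set.ncard_le_ncard fun w hw => ?_).trans (Set.ncard_union_le _ _)
  by_cases hw' : w ∈ Set.range f
  exacts [Or.inl ⟨hw, hw'⟩, Or.inr hw']

lemma mostarTerm_map_le_of_isometry (e : Sym2 W') :
    mostarTerm G (e.map f) ≤ mostarTerm H e + (Nat.card W - Nat.card W') := by
  induction e using Sym2.ind with
  | h a b =>
    rw [Sym2.map_mk, mostarTerm_mk, mostarTerm_mk]
    have := closerCount_le_closerCount_of_isometry hdist hf a b
    have := closerCount_le_closerCount_of_isometry hdist hf b a
    have := closerCount_le_closerCount_add_of_isometry hdist hf a b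
    have := closerCount_le_closerCount_add_of_isometry hdist hf b a
    omega

end Isometry

lemma mostar_eq_sum [Fintype W] [DecidableRel G.Adj] :
    mostar G = ∑ e ∈ G.edgeFinset, mostarTerm G e := by
  unfold mostar
  congr!

lemma mostar_le_sum_of_edgeSet_subset [Finite W] {s : Finset (Sym2 W)} (hs : G.edgeSet ⊆ s) :
    mostar G ≤ ∑ e ∈ s, mostarTerm G e := by
  classical
  have := Fintype.ofFinite W
  rw [mostar_eq_sum]
  exact sum_le_sum_of_subset (by simpa [← coe_subset] using hs)

lemma sum_mostarTerm_map_le_of_isometry [Finite W] [Fintype W'] [DecidableRel H.Adj]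
    {f : W' → W} (hdist : ∀ a b, G.dist (f a) (f b) = H.dist a b) (hf : Function.Injective f) :
    ∑ e ∈ H.edgeFinset, mostarTerm G (e.map f) ≤
      mostar H + Nat.card H.edgeSet * (Nat.card W - Nat.card W') := by
  calc ∑ e ∈ H.edgeFinset, mostarTerm G (e.map f)
      ≤ ∑ e ∈ H.edgeFinset, (mostarTerm H e + (Nat.card W - Nat.card W')) :=
        sum_le_sum fun e _ => mostarTerm_map_le_of_isometry hdist hf e
    _ = _ := by
        rw [sum_add_distrib, sum_const, smul_eq_mul, mostar_eq_sum, edgeFinset_card,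
          ← Nat.card_eq_fintype_card]

end SimpleGraph

lemma card_sigma_fin_subtype_fst {n : ℕ} {V : ℕ → Type*} [∀ i, Finite (V i)] (P : ℕ → Prop)
    [DecidablePred P] :
    Nat.card {w : (i : Fin n) × V i // P w.1} = ∑ t ∈ range n with P t, Nat.card (V t) := by
  rw [Nat.card_congr (Equiv.subtypeSigmaEquiv (fun i : Fin n => V i) (fun i => P i)),
    Nat.card_sigma, sum_filter,
    ← Fin.sum_univ_eq_sum_range (fun t => if P t then Nat.card (V t) else 0), ← sum_filter]
  exact (sum_subtype _ (by simp) (fun i : Fin n => Nat.card (V i))).symm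

namespace linkGraph

open SimpleGraph

variable {n : ℕ} {V : ℕ → Type*} {G : ∀ i, SimpleGraph (V i)} {x y : ∀ i, V i}

variable (x y) in
def inclFiber (i : Fin n) : G i →g linkGraph n V G x y :=
  ⟨fun a => ⟨i, a⟩, fun h => Or.inl ⟨i, _, _, h, rfl, rfl⟩⟩

lemma adj_bridge (i j : Fin n) (hij : j.val = i.val + 1) :
    (linkGraph n V G x y).Adj ⟨i, y i⟩ ⟨j, x j⟩ :=
  Or.inr ⟨i, j, hij, Or.inl ⟨rfl, rfl⟩⟩

lemma reachable_fiber (hconn : ∀ i < n, (G i).Connected) (i : Fin n) (a b : V i) :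
    (linkGraph n V G x y).Reachable ⟨i, a⟩ ⟨i, b⟩ :=
  ((hconn i i.isLt).preconnected a b).map (inclFiber x y i)

lemma preconnected (hconn : ∀ i < n, (G i).Connected) : (linkGraph n V G x y).Preconnected := by
  have hbase : ∀ (k : ℕ) (hk : k < n),
      (linkGraph n V G x y).Reachable ⟨⟨0, by omega⟩, x 0⟩ ⟨⟨k, hk⟩, x k⟩ := by
    intro k hk
    induction k with
    | zero => rfl
    | succ k ih =>
      exact (ih (by omega)).trans <| (reachable_fiber hconn ⟨k, by omega⟩ _ _).trans
        (adj_bridge ⟨k, by omega⟩ ⟨k + 1, hk⟩ rfl).reachable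
  intro u v
  have hroot : ∀ w : (i : Fin n) × V i,
      (linkGraph n V G x y).Reachable ⟨⟨0, u.1.pos⟩, x 0⟩ w :=
    fun w => (hbase w.1 w.1.isLt).trans (reachable_fiber hconn w.1 _ w.2)
  exact (hroot u).symm.trans (hroot v)

variable (x y) in
def retractFiber (i : Fin n) : (j : Fin n) × V j → V i
  | ⟨j, c⟩ => if h : j = i then h ▸ c else if j < i then x i else y i

@[simp]
lemma retractFiber_self (i : Fin n) (a : V i) : retractFiber x y i ⟨i, a⟩ = a := by
  simp [retractFiber]

lemma retractFiber_eq_or_adj (i : Fin n) (u v : (j : Fin n) × V j)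
    (huv : (linkGraph n V G x y).Adj u v) :
    retractFiber x y i u = retractFiber x y i v ∨
      (G i).Adj (retractFiber x y i u) (retractFiber x y i v) := by
  rcases huv with ⟨j, a, b, h, rfl, rfl⟩ | ⟨j, k, hjk, ⟨rfl, rfl⟩ | ⟨rfl, rfl⟩⟩
  · by_cases hj : j = i
    · subst hj
      simpa using Or.inr h
    · simp [retractFiber, hj]
  all_goals
    left
    simp only [retractFiber]
    split_ifs <;> subst_vars <;> first
      | rfl
      | (simp only [Fin.ext_iff, Fin.lt_def] at *; omega)

lemma dist_fiber (hconn : ∀ i < n, (G i).Connected) (i : Fin n) (a b : V i) :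
    (linkGraph n V G x y).dist ⟨i, a⟩ ⟨i, b⟩ = (G i).dist a b := by
  apply le_antisymm
  · obtain ⟨p, hp⟩ := (hconn i i.isLt).exists_walk_length_eq_dist a b
    have := dist_le (p.map (inclFiber x y i))
    rwa [Walk.length_map, hp] at this
  · simpa using dist_apply_le_of_adj_or_eq (retractFiber x y i) (retractFiber_eq_or_adj i)
      (reachable_fiber hconn i a b)

lemma eq_bridge_of_adj_of_le_of_lt {i j : Fin n} (hij : j.val = i.val + 1)
    {u v : (k : Fin n) × V k} (huv : (linkGraph n V G x y).Adj u v) (hu : u.1.val ≤ i)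
    (hv : ¬v.1.val ≤ i) : u = ⟨i, y i⟩ ∧ v = ⟨j, x j⟩ := by
  rcases huv with ⟨k, a, b, h, rfl, rfl⟩ | ⟨k, l, hkl, ⟨rfl, rfl⟩ | ⟨rfl, rfl⟩⟩
  · exact absurd hu hv
  · obtain rfl : k = i := Fin.ext (by simp only at hu hv; omega)
    obtain rfl : l = j := Fin.ext (by omega)
    exact ⟨rfl, rfl⟩
  · simp only at hu hv
    omega

variable (x y) in
def bridgeEdge (k : Fin (n - 1)) : Sym2 ((i : Fin n) × V i) :=
  s(⟨⟨k, by omega⟩, y k⟩, ⟨⟨k + 1, by omega⟩, x (k + 1)⟩)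

lemma mostarTerm_bridgeEdge [∀ i, Finite (V i)] (hconn : ∀ i < n, (G i).Connected)
    (k : Fin (n - 1)) :
    mostarTerm (linkGraph n V G x y) (bridgeEdge x y k) =
      ((∑ t ∈ range (k.val + 1), (Nat.card (V t) : ℤ)) -
        ∑ t ∈ Ico (k.val + 1) n, (Nat.card (V t) : ℤ)).natAbs := by
  have hlow : Nat.card {w : (i : Fin n) × V i | w.1.val ≤ k} =
      ∑ t ∈ range (k.val + 1), Nat.card (V t) := by
    rw [Set.coe_ofPred, card_sigma_fin_subtype_fst (· ≤ k.val)]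
    congr 1
    ext t
    simp only [mem_filter, mem_range]
    omega
  have hhigh : Nat.card ↥{w : (i : Fin n) × V i | w.1.val ≤ k}ᶜ =
      ∑ t ∈ Ico (k.val + 1) n, Nat.card (V t) := by
    rw [Set.compl_ofPred, Set.coe_ofPred, card_sigma_fin_subtype_fst (¬· ≤ k.val)]
    congr 1
    ext t
    simp only [mem_filter, mem_range, mem_Ico]
    omega
  have hk : k.val + 1 < n := by omega
  rw [bridgeEdge.eq_def, mostarTerm_eq_of_cut (S := {w | w.1.val ≤ k.val}) (preconnected hconn)
    (adj_bridge ⟨k, by omega⟩ ⟨k + 1, hk⟩ rfl) (Nat.le_refl _) (by simp)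
    (fun a b h ha hb => eq_bridge_of_adj_of_le_of_lt (i := ⟨k, by omega⟩) rfl h ha hb),
    hlow, hhigh]
  push_cast
  rfl

lemma mostar_le_sum_fibers_add_sum_bridges [∀ i, Fintype (V i)] [∀ i, DecidableRel (G i).Adj] :
    mostar (linkGraph n V G x y) ≤
      ∑ i : Fin n, ∑ e ∈ (G i).edgeFinset, mostarTerm (linkGraph n V G x y) (e.map (Sigma.mk i)) +
        ∑ k, mostarTerm (linkGraph n V G x y) (bridgeEdge x y k) := by
  classical
  set fiberEdges : Finset (Sym2 ((i : Fin n) × V i)) :=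
    (univ.sigma fun i : Fin n => (G i).edgeFinset).image fun e => e.2.map (Sigma.mk e.1)
  have hsub : (linkGraph n V G x y).edgeSet ⊆ ↑(fiberEdges ∪ univ.image (bridgeEdge x y)) := by
    intro e he
    induction e using Sym2.ind with
    | h u v =>
      rcases he with ⟨i, a, b, h, rfl, rfl⟩ | ⟨i, j, hij, ⟨rfl, rfl⟩ | ⟨rfl, rfl⟩⟩
      · exact mem_union_left _ (mem_image.mpr ⟨⟨i, s(a, b)⟩, by simpa using h, rfl⟩)
      all_goals
        refine mem_union_right _ (mem_image.mpr ⟨⟨i, by omega⟩, mem_univ _, ?_⟩)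
        obtain ⟨j, hj⟩ := j
        simp only at hij
        subst hij
        simp [bridgeEdge, Sym2.eq_swap]
  calc mostar (linkGraph n V G x y)
      ≤ ∑ e ∈ fiberEdges ∪ univ.image (bridgeEdge x y), mostarTerm (linkGraph n V G x y) e :=
        mostar_le_sum_of_edgeSet_subset hsub
    _ ≤ ∑ e ∈ fiberEdges, mostarTerm (linkGraph n V G x y) e +
          ∑ e ∈ univ.image (bridgeEdge x y), mostarTerm (linkGraph n V G x y) e :=
        (Nat.le_add_right _ _).trans_eq sum_union_inter
    _ ≤ _ := by
        gcongr
        · exact (sum_image_le_of_nonneg fun _ _ => Nat.zero_le _).trans_eq (sum_sigma _ _ _)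
        · exact sum_image_le_of_nonneg fun _ _ => Nat.zero_le _

end linkGraph

theorem mostar_linkGraph_le_general (n : ℕ) (V : ℕ → Type*) [∀ i, Finite (V i)]
    (G : ∀ i, SimpleGraph (V i)) (hconn : ∀ i < n, (G i).Connected) (x y : ∀ i, V i) :
    mostar (linkGraph n V G x y) ≤
      (∑ i ∈ range n, mostar (G i)) +
      (∑ i ∈ range n,
        Nat.card (G i).edgeSet * (Nat.card ((i : Fin n) × V i.val) - Nat.card (V i))) +
      ∑ i ∈ range (n - 1),
        ((∑ t ∈ range (i + 1), (Nat.card (V t) : ℤ)) -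
          ∑ t ∈ Finset.Ico (i + 1) n, (Nat.card (V t) : ℤ)).natAbs := by
  classical
  have := fun i => Fintype.ofFinite (V i)
  open SimpleGraph linkGraph in
  calc mostar (linkGraph n V G x y)
      ≤ ∑ i : Fin n, ∑ e ∈ (G i).edgeFinset,
            mostarTerm (linkGraph n V G x y) (e.map (Sigma.mk i)) +
          ∑ k, mostarTerm (linkGraph n V G x y) (bridgeEdge x y k) :=
        mostar_le_sum_fibers_add_sum_bridges
    _ ≤ ∑ i : Fin n, (mostar (G i) +
            Nat.card (G i).edgeSet * (Nat.card ((i : Fin n) × V i.val) - Nat.card (V i))) +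
          ∑ k : Fin (n - 1), ((∑ t ∈ range (k.val + 1), (Nat.card (V t) : ℤ)) -
            ∑ t ∈ Ico (k.val + 1) n, (Nat.card (V t) : ℤ)).natAbs := by
        gcongr with i _ k
        · exact sum_mostarTerm_map_le_of_isometry (dist_fiber hconn i) sigma_mk_injective
        · exact (mostarTerm_bridgeEdge hconn k).le
    _ = _ := by
        rw [Fin.sum_univ_eq_sum_range (fun i => mostar (G i) + Nat.card (G i).edgeSet *
            (Nat.card ((i : Fin n) × V i.val) - Nat.card (V i))),
          Fin.sum_univ_eq_sum_range (fun k => ((∑ t ∈ range (k + 1), (Nat.card (V t) : ℤ)) -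
            ∑ t ∈ Ico (k + 1) n, (Nat.card (V t) : ℤ)).natAbs), sum_add_distrib]

theorem mostar_linkGraph_le (n : ℕ) (hn : 1 ≤ n) (V : ℕ → Type*) [∀ i, Finite (V i)]
    (G : ∀ i, SimpleGraph (V i)) (hconn : ∀ i < n, (G i).Connected) (x y : ∀ i, V i) :
    mostar (linkGraph n V G x y) ≤
      (∑ i ∈ range n, mostar (G i)) +
      (∑ i ∈ range n,
        Nat.card (G i).edgeSet * (Nat.card ((i : Fin n) × V i.val) - Nat.card (V i))) +
      ∑ i ∈ range (n - 1),
        ((∑ t ∈ range (i + 1), (Nat.card (V t) : ℤ)) -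
          ∑ t ∈ Finset.Ico (i + 1) n, (Nat.card (V t) : ℤ)).natAbs :=
  mostar_linkGraph_le_general n V G hconn x y
end

section
/- Let G be the circuit of pairwise disjoint connected graphs G_1, …, G_n with respect to vertices x_i ∈ V(G_i), obtained by identifying x_i with the i-th vertex of the cycle C_n. If n = 2t is even, then Mo(G) ≤ Σ_{i=1}^{n} Mo(G_i) + Σ_{i=1}^{n} |E(G_i)|·(|V(G)| − |V(G_i)|) + n·Σ_{i=1}^{t} | |V(G_i)| − |V(G_{t+i})| |; if n = 2t−1 is odd, then Mo(G) ≤ Σ_{i=1}^{n} Mo(G_i) + Σ_{i=1}^{n} |E(G_i)|·(|V(G)| − |V(G_i)|) + (n−1)·|V(G)|. -/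
open Finset

/-- The circuit of the graphs `G 0, …, G (n-1)` with respect to the vertices `x i`:
the vertex `x i` of `G i` is identified with the `i`-th vertex of the cycle `Cₙ`. -/
def circuitGraph (n : ℕ) (V : ℕ → Type*) (G : ∀ i, SimpleGraph (V i)) (x : ∀ i, V i) :
    SimpleGraph ((i : Fin n) × V i.val) where
  Adj p q :=
    (∃ (i : Fin n) (a b : V i.val), (G i.val).Adj a b ∧ p = ⟨i, a⟩ ∧ q = ⟨i, b⟩) ∨
    (p ≠ q ∧ ∃ (i j : Fin n), (i.val + 1) % n = j.val ∧
      ((p = ⟨i, x i.val⟩ ∧ q = ⟨j, x j.val⟩) ∨ (p = ⟨j, x j.val⟩ ∧ q = ⟨i, x i.val⟩)))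
  symm := by
    refine ⟨?_⟩
    rintro p q (⟨i, a, b, h, rfl, rfl⟩ | ⟨hne, i, j, hij, (⟨rfl, rfl⟩ | ⟨rfl, rfl⟩)⟩)
    · exact Or.inl ⟨i, b, a, h.symm, rfl, rfl⟩
    · exact Or.inr ⟨hne.symm, i, j, hij, Or.inr ⟨rfl, rfl⟩⟩
    · exact Or.inr ⟨hne.symm, i, j, hij, Or.inl ⟨rfl, rfl⟩⟩
  loopless := by
    refine ⟨?_⟩
    rintro p (⟨i, a, b, h, rfl, hab⟩ | ⟨hne, _⟩)
    · obtain rfl : a = b := by simpa using hab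
      exact (G i.val).irrefl h
    · exact hne rfl

/-!
Distances in the circuit are explicit. Inside a block they are those of `G i`, because the
retraction collapsing all other blocks onto the root `x i` does not increase distances. From a
vertex `c` of block `k` to the root of block `i` the distance is `d(c, x k)` plus the cyclic
distance from `k` to `i`; the lower bound holds because this expression changes by at most one
along every edge.

For an edge inside block `i`, each vertex of another block is closer to at most one endpoint,
which accounts for `Mo(G i) + |E(G i)| (|V(G)| - |V(G i)|)`. For a cycle edge `x i x (i+1)`
whole blocks lie on one side or the other according to their cyclic distances. If `n = 2t`,
block `k + t` lies on the opposite side from block `k`, so the contributions pair up as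
`±(|V k| - |V (k+t)|)`. If `n = 2t - 1`, block `i + t` is equidistant from both endpoints, so the
edge contributes at most `|V(G)| - |V (i+t)|`, and these bounds add up to `(n - 1) |V(G)|`.
-/

open SimpleGraph

namespace SimpleGraph

variable {W : Type*} {H : SimpleGraph W} {u v : W}

theorem Adj.dist_le_dist_add_one (h : H.Adj u v) (w : W) : H.dist u w ≤ H.dist v w + 1 := by
  have := h.diff_dist_adj (u := w)
  rw [dist_comm (u := u), dist_comm (u := v)]
  omega

variable {f : W → ℕ}

theorem Walk.le_add_length (hf : ∀ ⦃v w⦄, H.Adj v w → f v ≤ f w + 1) (p : H.Walk u v) :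
    f u ≤ f v + p.length := by
  induction p with
  | nil => simp
  | cons h _ ih => rw [Walk.length_cons]; have := hf h; omega

theorem Reachable.le_add_dist (hf : ∀ ⦃v w⦄, H.Adj v w → f v ≤ f w + 1)
    (h : H.Reachable u v) : f u ≤ f v + H.dist u v := by
  obtain ⟨p, hp⟩ := h.exists_walk_length_eq_dist
  exact hp ▸ p.le_add_length hf

end SimpleGraph

theorem Fin.val_sub_eq_ite {n : ℕ} (a b : Fin n) :
    (a - b).val = if b.val ≤ a.val then a.val - b.val else n + a.val - b.val := by
  split_ifs with h
  · exact Fin.sub_val_of_le h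
  · exact Fin.coe_sub_iff_lt.mpr (not_le.mp h)

section CycDist

variable {n : ℕ}

def cycDist (i j : Fin n) : ℕ := min (j - i).val (i - j).val

theorem cycDist_comm (i j : Fin n) : cycDist i j = cycDist j i := min_comm _ _

@[simp] theorem cycDist_self (i : Fin n) : cycDist i i = 0 := by simp [cycDist, Fin.val_sub_eq_ite]

theorem cycDist_triangle (i j k : Fin n) : cycDist i k ≤ cycDist i j + cycDist j k := by
  simp only [cycDist, Fin.val_sub_eq_ite]
  split_ifs <;> omega

theorem cycDist_add_one_le [NeZero n] (i : Fin n) : cycDist i (i + 1) ≤ 1 := by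
  unfold cycDist
  rw [add_sub_cancel_left, Fin.val_one']
  exact (min_le_left _ _).trans (Nat.mod_le _ _)

theorem cycDist_add_half_add {s : Fin n} (hs : n = 2 * s.val) (i j : Fin n) :
    cycDist (i + s) j + cycDist i j = s := by
  simp only [cycDist, Fin.val_sub_eq_ite, Fin.val_add_eq_ite]
  split_ifs <;> omega

theorem cycDist_add_half_self_eq_add_one [NeZero n] {s : Fin n} (hs : n + 1 = 2 * s.val)
    (i : Fin n) : cycDist (i + s) i = cycDist (i + s) (i + 1) := by
  have h1 : ((1 : Fin n) : ℕ) = 1 := by rw [Fin.val_one', Nat.mod_eq_of_lt (by omega)]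
  simp only [cycDist, Fin.val_sub_eq_ite, Fin.val_add_eq_ite, h1]
  split_ifs <;> omega

end CycDist

theorem Fin.natAbs_sum_mul_le_of_antiperiodic {n : ℕ} {s : Fin n} (hs : n = 2 * s.val)
    {ε : Fin n → ℤ} (hε : ∀ k, (ε k).natAbs ≤ 1) (hanti : Function.Antiperiodic ε s)
    (a : ℕ → ℤ) :
    (∑ k, ε k * a k).natAbs ≤ ∑ m ∈ range s, (a m - a (s + m)).natAbs := by
  -- the summand as a function on `ℕ`, so that the sum over `range (s + s)` can be split at `s`
  let F : ℕ → ℤ := fun m => if h : m < n then ε ⟨m, h⟩ * a m else 0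
  have hpair (m : ℕ) (hm : m < s) :
      F m + F (s + m) = ε ⟨m, by omega⟩ * (a m - a (s + m)) := by
    have hshift : (⟨s + m, by omega⟩ : Fin n) = ⟨m, by omega⟩ + s :=
      Fin.ext (by simp only [Fin.val_add_eq_ite]; split_ifs <;> omega)
    simp only [F, dif_pos (show m < n by omega), dif_pos (show s + m < n by omega), hshift,
      hanti _]
    ring
  calc (∑ k, ε k * a k).natAbs = (∑ m ∈ range (s + s), F m).natAbs := by
        rw [← two_mul, ← hs, ← Fin.sum_univ_eq_sum_range]
        simp [F]
    _ = (∑ m ∈ range s, (F m + F (s + m))).natAbs := by rw [sum_range_add, sum_add_distrib]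
    _ ≤ ∑ m ∈ range s, (F m + F (s + m)).natAbs := Int.natAbs_sum_le _ _
    _ ≤ _ := sum_le_sum fun m hm => by
        rw [hpair m (mem_range.mp hm), Int.natAbs_mul]
        exact mul_le_of_le_one_left (Nat.zero_le _) (hε _)

theorem mostar_eq_sum_edgeFinset {W : Type*} [Finite W] (H : SimpleGraph W)
    [Fintype H.edgeSet] : mostar H = ∑ e ∈ H.edgeFinset, mostarTerm H e := by
  rw [mostar]
  congr
  exact Subsingleton.elim _ _

theorem Nat.card_lt_add_card_lt_le {α : Type*} [Finite α] (f g : α → ℕ) :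
    Nat.card {a // f a < g a} + Nat.card {a // g a < f a} ≤ Nat.card α := by
  rw [← Nat.card_sum]
  refine Nat.card_le_card_of_injective (Sum.elim Subtype.val Subtype.val)
    (Subtype.val_injective.sumElim Subtype.val_injective fun a b h => lt_asymm (h ▸ a.2) b.2)

section BlockCloserCount

variable {ι : Type*} {W : ι → Type*}

noncomputable def blockCloserCount (H : SimpleGraph (Σ k, W k)) (k : ι) (u v : Σ k, W k) : ℕ :=
  Nat.card {c : W k // H.dist ⟨k, c⟩ u < H.dist ⟨k, c⟩ v}

variable [Fintype ι] [∀ k, Finite (W k)]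

theorem closerCount_eq_sum_blockCloserCount (H : SimpleGraph (Σ k, W k)) (u v : Σ k, W k) :
    closerCount H u v = ∑ k, blockCloserCount H k u v := by
  simp only [closerCount, blockCloserCount]
  rw [← Nat.card_sigma]
  exact Nat.card_congr
    { toFun p := ⟨p.1.1, p.1.2, p.2⟩
      invFun q := ⟨⟨q.1, q.2.1⟩, q.2.2⟩
      left_inv _ := rfl
      right_inv _ := rfl }

theorem natAbs_closerCount_sub_le (H : SimpleGraph (Σ k, W k)) (u v : Σ k, W k) (k₀ : ι) :
    ((closerCount H u v : ℤ) - closerCount H v u).natAbs ≤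
      ((blockCloserCount H k₀ u v : ℤ) - blockCloserCount H k₀ v u).natAbs +
        (Nat.card (Σ k, W k) - Nat.card (W k₀)) := by
  classical
  have hrest : ∑ k ∈ univ.erase k₀, (blockCloserCount H k u v + blockCloserCount H k v u) ≤
      ∑ k ∈ univ.erase k₀, Nat.card (W k) :=
    sum_le_sum fun k _ => Nat.card_lt_add_card_lt_le _ _
  rw [sum_add_distrib] at hrest
  rw [closerCount_eq_sum_blockCloserCount, closerCount_eq_sum_blockCloserCount, Nat.card_sigma,
    ← add_sum_erase _ _ (mem_univ k₀), ← add_sum_erase _ _ (mem_univ k₀),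
    ← add_sum_erase _ _ (mem_univ k₀)]
  omega

end BlockCloserCount

namespace circuitGraph

variable {n : ℕ} {V : ℕ → Type*} {G : ∀ i, SimpleGraph (V i)} {x : ∀ i, V i}

theorem adj_mk_mk_self {i : Fin n} {a b : V i} :
    (circuitGraph n V G x).Adj ⟨i, a⟩ ⟨i, b⟩ ↔ (G i).Adj a b := by
  refine ⟨?_, fun h => Or.inl ⟨i, a, b, h, rfl, rfl⟩⟩
  rintro (⟨k, c, d, h, h₁, h₂⟩ | ⟨hne, k, l, -, ⟨h₁, h₂⟩ | ⟨h₁, h₂⟩⟩)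
  · cases h₁; cases h₂; exact h
  all_goals cases h₁; cases h₂; exact absurd rfl hne

theorem adj_mk_mk_of_ne [NeZero n] {i j : Fin n} (hij : i ≠ j) {a : V i} {b : V j} :
    (circuitGraph n V G x).Adj ⟨i, a⟩ ⟨j, b⟩ ↔
      a = x i ∧ b = x j ∧ (j = i + 1 ∨ i = j + 1) := by
  have hsucc {k l : Fin n} : (k.val + 1) % n = l.val ↔ l = k + 1 := by
    rw [Fin.ext_iff, Fin.val_add, Fin.val_one', Nat.add_mod_mod, eq_comm]
  constructor
  · rintro (⟨k, c, d, h, h₁, h₂⟩ | ⟨-, k, l, hkl, ⟨h₁, h₂⟩ | ⟨h₁, h₂⟩⟩)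
    · cases h₁; cases h₂; exact absurd rfl hij
    · cases h₁; cases h₂; exact ⟨rfl, rfl, Or.inl (hsucc.mp hkl)⟩
    · cases h₁; cases h₂; exact ⟨rfl, rfl, Or.inr (hsucc.mp hkl)⟩
  · have hne : (⟨i, a⟩ : (k : Fin n) × V k) ≠ ⟨j, b⟩ := (hij <| congrArg Sigma.fst ·)
    rintro ⟨rfl, rfl, h | h⟩
    · exact Or.inr ⟨hne, i, j, hsucc.mpr h, Or.inl ⟨rfl, rfl⟩⟩
    · exact Or.inr ⟨hne, j, i, hsucc.mpr h, Or.inr ⟨rfl, rfl⟩⟩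

theorem exists_walk_mk_mk_self {i : Fin n} (hc : (G i).Connected) (a b : V i) :
    ∃ p : (circuitGraph n V G x).Walk ⟨i, a⟩ ⟨i, b⟩, p.length = (G i).dist a b := by
  obtain ⟨p, hp⟩ := hc.exists_walk_length_eq_dist a b
  exact ⟨p.map ⟨Sigma.mk i, adj_mk_mk_self.mpr⟩, by rw [Walk.length_map, hp]⟩

/-- Collapses every block other than the `i`-th one onto its root `x i`. -/
def retract (x : ∀ i, V i) (i : Fin n) (p : (k : Fin n) × V k) : V i :=
  Function.update (β := fun k : Fin n => V k → V i) (fun _ _ => x i) i id p.1 p.2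

@[simp] theorem retract_mk_self (i : Fin n) (a : V i) : retract x i ⟨i, a⟩ = a := by
  simp [retract]

theorem retract_mk_of_ne {k i : Fin n} (h : k ≠ i) (c : V k) : retract x i ⟨k, c⟩ = x i := by
  simp [retract, Function.update_of_ne h]

@[simp] theorem retract_root (k i : Fin n) : retract x i ⟨k, x k⟩ = x i := by
  rcases eq_or_ne k i with rfl | h
  · exact retract_mk_self k _
  · exact retract_mk_of_ne h _

variable [NeZero n]

theorem exists_walk_root_of_val_sub (d : ℕ) :
    ∀ i j : Fin n, (j - i).val = d →
      ∃ p : (circuitGraph n V G x).Walk ⟨i, x i⟩ ⟨j, x j⟩, p.length = d := by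
  induction d with
  | zero =>
    intro i j h
    obtain rfl : j = i := Fin.ext (by rw [Fin.val_sub_eq_ite] at h; split_ifs at h <;> omega)
    exact ⟨Walk.nil, rfl⟩
  | succ d ih =>
    intro i j h
    have hn : 1 < n := by have := (j - i).isLt; omega
    have h1 : ((1 : Fin n) : ℕ) = 1 := by rw [Fin.val_one', Nat.mod_eq_of_lt hn]
    have hne : i ≠ i + 1 := by
      rw [Ne, Fin.ext_iff, Fin.val_add_eq_ite, h1]; split_ifs <;> omega
    obtain ⟨p, hp⟩ := ih (i + 1) j (by
      simp only [Fin.val_sub_eq_ite, Fin.val_add_eq_ite, h1] at h ⊢; split_ifs at h ⊢ <;> omega)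
    exact ⟨.cons ((adj_mk_mk_of_ne hne).mpr ⟨rfl, rfl, .inl rfl⟩) p,
      by rw [Walk.length_cons, hp]⟩

theorem exists_walk_root (i j : Fin n) :
    ∃ p : (circuitGraph n V G x).Walk ⟨i, x i⟩ ⟨j, x j⟩, p.length = cycDist i j := by
  rcases min_choice (j - i).val (i - j).val with h | h
  · exact exists_walk_root_of_val_sub _ i j h.symm
  · obtain ⟨p, hp⟩ := exists_walk_root_of_val_sub (x := x) (G := G) _ j i h.symm
    exact ⟨p.reverse, by rw [Walk.length_reverse, hp]; rfl⟩

theorem adj_retract_or_eq {i : Fin n} {p q : (k : Fin n) × V k}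
    (h : (circuitGraph n V G x).Adj p q) :
    (G i).Adj (retract x i p) (retract x i q) ∨ retract x i p = retract x i q := by
  obtain ⟨k, c⟩ := p
  obtain ⟨l, d⟩ := q
  by_cases hkl : k = l
  · subst hkl
    by_cases hki : k = i
    · subst hki
      exact .inl (by simpa using adj_mk_mk_self.mp h)
    · exact .inr (by rw [retract_mk_of_ne hki, retract_mk_of_ne hki])
  · obtain ⟨rfl, rfl, -⟩ := (adj_mk_mk_of_ne hkl).mp h
    exact .inr (by simp)

theorem dist_mk_mk_self {i : Fin n} (hc : (G i).Connected) (a b : V i) :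
    (circuitGraph n V G x).dist ⟨i, a⟩ ⟨i, b⟩ = (G i).dist a b := by
  obtain ⟨p, hp⟩ := exists_walk_mk_mk_self (x := x) hc a b
  refine le_antisymm (hp ▸ dist_le p) ?_
  have hf : ∀ ⦃q r⦄, (circuitGraph n V G x).Adj q r →
      (G i).dist (retract x i q) b ≤ (G i).dist (retract x i r) b + 1 := by
    intro q r h
    rcases adj_retract_or_eq h with h | h
    · exact h.dist_le_dist_add_one b
    · rw [h]; exact Nat.le_succ _
  simpa using p.reachable.le_add_dist hf

theorem dist_mk_root (hc : ∀ k : Fin n, (G k).Connected) (k i : Fin n) (c : V k) :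
    (circuitGraph n V G x).dist ⟨k, c⟩ ⟨i, x i⟩ = (G k).dist c (x k) + cycDist k i := by
  obtain ⟨p, hp⟩ := exists_walk_mk_mk_self (x := x) (hc k) c (x k)
  obtain ⟨q, hq⟩ := exists_walk_root (G := G) k i
  refine le_antisymm ((dist_le (p.append q)).trans_eq (by rw [Walk.length_append, hp, hq])) ?_
  have hf : ∀ ⦃r r' : (l : Fin n) × V l⦄, (circuitGraph n V G x).Adj r r' →
      (G r.1).dist r.2 (x r.1) + cycDist r.1 i ≤
        (G r'.1).dist r'.2 (x r'.1) + cycDist r'.1 i + 1 := by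
    rintro ⟨l, d⟩ ⟨m, e⟩ h
    by_cases hlm : l = m
    · subst hlm
      have := (adj_mk_mk_self.mp h).dist_le_dist_add_one (x l)
      dsimp only
      omega
    · obtain ⟨rfl, rfl, hs⟩ := (adj_mk_mk_of_ne hlm).mp h
      have hlm : cycDist l m ≤ 1 := by
        rcases hs with rfl | rfl
        · exact cycDist_add_one_le _
        · rw [cycDist_comm]; exact cycDist_add_one_le _
      have := cycDist_triangle l m i
      simp only [SimpleGraph.dist_self]
      omega
  simpa using (p.append q).reachable.le_add_dist hf

theorem blockCloserCount_root (hc : ∀ k : Fin n, (G k).Connected) (k i j : Fin n) :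
    blockCloserCount (circuitGraph n V G x) k ⟨i, x i⟩ ⟨j, x j⟩ =
      if cycDist k i < cycDist k j then Nat.card (V k) else 0 := by
  simp only [blockCloserCount, dist_mk_root hc, add_lt_add_iff_left]
  split_ifs with h
  · exact Nat.card_congr (Equiv.subtypeUnivEquiv fun _ => h)
  · simp [h]

def cycleEdge (x : ∀ i, V i) (i : Fin n) : Sym2 ((k : Fin n) × V k) :=
  s(⟨i, x i⟩, ⟨i + 1, x (i + 1 : Fin n)⟩)

theorem edgeSet_subset :
    (circuitGraph n V G x).edgeSet ⊆
      (⋃ i : Fin n, Sym2.map (Sigma.mk i) '' (G i).edgeSet) ∪ Set.range (cycleEdge x) := by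
  intro e he
  induction e using Sym2.ind with
  | _ p q =>
  obtain ⟨k, c⟩ := p
  obtain ⟨l, d⟩ := q
  rw [mem_edgeSet] at he
  by_cases hkl : k = l
  · subst hkl
    exact .inl (Set.mem_iUnion.mpr ⟨k, s(c, d), adj_mk_mk_self.mp he, rfl⟩)
  · obtain ⟨rfl, rfl, rfl | rfl⟩ := (adj_mk_mk_of_ne hkl).mp he
    · exact .inr ⟨k, rfl⟩
    · exact .inr ⟨l, Sym2.eq_swap⟩

variable [∀ i, Finite (V i)]

theorem mostarTerm_map_sigmaMk_le (hc : ∀ k : Fin n, (G k).Connected) (i : Fin n)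
    (e : Sym2 (V i)) :
    mostarTerm (circuitGraph n V G x) (e.map (Sigma.mk i)) ≤
      mostarTerm (G i) e + (Nat.card ((k : Fin n) × V k) - Nat.card (V i)) := by
  induction e using Sym2.ind with
  | _ a b =>
  have hblock (a b : V i) :
      blockCloserCount (circuitGraph n V G x) i ⟨i, a⟩ ⟨i, b⟩ = closerCount (G i) a b :=
    Nat.card_congr (Equiv.subtypeEquivRight fun c => by
      rw [dist_mk_mk_self (hc i), dist_mk_mk_self (hc i)])
  simp only [Sym2.map_mk, mostarTerm, Sym2.lift_mk, ← hblock]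
  exact natAbs_closerCount_sub_le (W := fun k : Fin n => V k) _ ⟨i, a⟩ ⟨i, b⟩ i

theorem mostarTerm_cycleEdge_le_of_odd (hc : ∀ k : Fin n, (G k).Connected) {s : Fin n}
    (hs : n + 1 = 2 * s.val) (i : Fin n) :
    mostarTerm (circuitGraph n V G x) (cycleEdge x i) ≤
      Nat.card ((k : Fin n) × V k) - Nat.card (V (i + s : Fin n)) := by
  simpa [mostarTerm, cycleEdge, blockCloserCount_root hc,
    cycDist_add_half_self_eq_add_one hs] using
    natAbs_closerCount_sub_le (circuitGraph n V G x) ⟨i, x i⟩ ⟨i + 1, x (i + 1 : Fin n)⟩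
      (i + s)

theorem mostarTerm_root_le_of_even (hc : ∀ k : Fin n, (G k).Connected) {t : ℕ} (ht : n = 2 * t)
    (i j : Fin n) :
    mostarTerm (circuitGraph n V G x) s(⟨i, x i⟩, ⟨j, x j⟩) ≤
      ∑ m ∈ range t, ((Nat.card (V m) : ℤ) - Nat.card (V (t + m))).natAbs := by
  have htn : t < n := by have := NeZero.ne n; omega
  let ε : Fin n → ℤ := fun k =>
    (if cycDist k i < cycDist k j then 1 else 0) - (if cycDist k j < cycDist k i then 1 else 0)
  have hε (k : Fin n) : (ε k).natAbs ≤ 1 := by simp only [ε]; split_ifs <;> simp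
  have hanti : Function.Antiperiodic ε ⟨t, htn⟩ := fun k => by
    have hi := cycDist_add_half_add (s := ⟨t, htn⟩) ht k i
    have hj := cycDist_add_half_add (s := ⟨t, htn⟩) ht k j
    simp only [ε]
    split_ifs <;> omega
  have hdiff : (closerCount (circuitGraph n V G x) ⟨i, x i⟩ ⟨j, x j⟩ : ℤ) -
      closerCount (circuitGraph n V G x) ⟨j, x j⟩ ⟨i, x i⟩ =
        ∑ k, ε k * Nat.card (V k) := by
    simp only [closerCount_eq_sum_blockCloserCount, blockCloserCount_root hc]
    push_cast
    rw [← sum_sub_distrib]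
    refine sum_congr rfl fun k _ => ?_
    simp only [ε]
    split_ifs <;> simp_all
  simp only [mostarTerm, Sym2.lift_mk]
  rw [hdiff]
  exact Fin.natAbs_sum_mul_le_of_antiperiodic (s := ⟨t, htn⟩) ht hε hanti
    fun m => (Nat.card (V m) : ℤ)

theorem mostar_le_add_sum_cycleEdge (hc : ∀ k : Fin n, (G k).Connected) :
    mostar (circuitGraph n V G x) ≤
      (∑ i ∈ range n, mostar (G i)) +
      (∑ i ∈ range n, Nat.card (G i).edgeSet *
        (Nat.card ((k : Fin n) × V k) - Nat.card (V i))) +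
      ∑ i, mostarTerm (circuitGraph n V G x) (cycleEdge x i) := by
  classical
  let (i : ℕ) : Fintype (V i) := Fintype.ofFinite _
  let : Fintype ((k : Fin n) × V k) := Fintype.ofFinite _
  set C := circuitGraph n V G x
  set N := Nat.card ((k : Fin n) × V k)
  let φ : (Σ i : Fin n, Sym2 (V i)) ⊕ Fin n → Sym2 ((k : Fin n) × V k) :=
    Sum.elim (fun e => e.2.map (Sigma.mk e.1)) (cycleEdge x)
  let D := (univ.sigma fun i : Fin n => (G i).edgeFinset).disjSum (univ : Finset (Fin n))
  have hsub : C.edgeFinset ⊆ D.image φ := by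
    intro e he
    rw [mem_edgeFinset] at he
    rcases edgeSet_subset he with he | ⟨i, rfl⟩
    · obtain ⟨i, e, hei, rfl⟩ := Set.mem_iUnion.mp he
      exact mem_image.mpr ⟨.inl ⟨i, e⟩, by simpa [D] using hei, rfl⟩
    · exact mem_image.mpr ⟨.inr i, by simp [D], rfl⟩
  calc mostar C = ∑ e ∈ C.edgeFinset, mostarTerm C e := mostar_eq_sum_edgeFinset C
    _ ≤ ∑ e ∈ D.image φ, mostarTerm C e :=
        sum_le_sum_of_subset hsub
    _ ≤ ∑ p ∈ D, mostarTerm C (φ p) :=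
        sum_image_le_of_nonneg fun _ _ => Nat.zero_le _
    _ = ∑ i : Fin n, ∑ e ∈ (G i).edgeFinset, mostarTerm C (e.map (Sigma.mk i)) +
          ∑ i, mostarTerm C (cycleEdge x i) := by
        rw [sum_disjSum, sum_sigma]
        rfl
    _ ≤ ∑ i : Fin n, ∑ e ∈ (G i).edgeFinset, (mostarTerm (G i) e + (N - Nat.card (V i))) +
          ∑ i, mostarTerm C (cycleEdge x i) := by
        gcongr with i _ e
        exact mostarTerm_map_sigmaMk_le hc i e
    _ = _ := by
        simp only [sum_add_distrib, sum_const, smul_eq_mul, ← mostar_eq_sum_edgeFinset,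
          edgeFinset_card, ← Nat.card_eq_fintype_card]
        rw [Fin.sum_univ_eq_sum_range (fun i => mostar (G i)),
          Fin.sum_univ_eq_sum_range (fun i => Nat.card (G i).edgeSet * (N - Nat.card (V i)))]

theorem sum_mostarTerm_cycleEdge_le_of_odd (hc : ∀ k : Fin n, (G k).Connected) {s : Fin n}
    (hs : n + 1 = 2 * s.val) :
    ∑ i, mostarTerm (circuitGraph n V G x) (cycleEdge x i) ≤
      (n - 1) * Nat.card ((k : Fin n) × V k) := by
  have hN : Nat.card ((k : Fin n) × V k) = ∑ k : Fin n, Nat.card (V k) := Nat.card_sigma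
  have hV (k : Fin n) : Nat.card (V k) ≤ Nat.card ((k : Fin n) × V k) :=
    hN ▸ single_le_sum (f := fun k : Fin n => Nat.card (V k)) (fun _ _ => Nat.zero_le _)
      (mem_univ k)
  calc ∑ i, mostarTerm (circuitGraph n V G x) (cycleEdge x i)
      ≤ ∑ i : Fin n, (Nat.card ((k : Fin n) × V k) - Nat.card (V (i + s : Fin n))) :=
        sum_le_sum fun i _ => mostarTerm_cycleEdge_le_of_odd hc hs i
    _ = ∑ i : Fin n, (Nat.card ((k : Fin n) × V k) - Nat.card (V i)) :=
        Equiv.sum_comp (Equiv.addRight s) fun k => Nat.card ((k : Fin n) × V k) - Nat.card (V k)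
    _ = (n - 1) * Nat.card ((k : Fin n) × V k) := by
        rw [sum_tsub_distrib _ fun k _ => hV k, ← hN, Nat.sub_one_mul]
        simp

end circuitGraph

open circuitGraph in
theorem mostar_circuitGraph_le (n : ℕ) (hn : 3 ≤ n) (V : ℕ → Type*) [∀ i, Finite (V i)]
    (G : ∀ i, SimpleGraph (V i)) (hconn : ∀ i < n, (G i).Connected) (x : ∀ i, V i) :
    (∀ t : ℕ, n = 2 * t →
      mostar (circuitGraph n V G x) ≤
        (∑ i ∈ range n, mostar (G i)) +
        (∑ i ∈ range n, Nat.card (G i).edgeSet *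
          (Nat.card ((i : Fin n) × V i.val) - Nat.card (V i))) +
        n * ∑ i ∈ range t, ((Nat.card (V i) : ℤ) - Nat.card (V (t + i))).natAbs) ∧
    (∀ t : ℕ, n = 2 * t - 1 →
      mostar (circuitGraph n V G x) ≤
        (∑ i ∈ range n, mostar (G i)) +
        (∑ i ∈ range n, Nat.card (G i).edgeSet *
          (Nat.card ((i : Fin n) × V i.val) - Nat.card (V i))) +
        (n - 1) * Nat.card ((i : Fin n) × V i.val)) := by
  have : NeZero n := ⟨by omega⟩
  have hc (i : Fin n) : (G i).Connected := hconn i i.isLt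
  refine ⟨fun t ht => (mostar_le_add_sum_cycleEdge hc).trans ?_,
    fun t ht => (mostar_le_add_sum_cycleEdge hc).trans ?_⟩
  · gcongr
    calc ∑ i, mostarTerm (circuitGraph n V G x) (cycleEdge x i)
        ≤ (univ : Finset (Fin n)).card •
            ∑ m ∈ range t, ((Nat.card (V m) : ℤ) - Nat.card (V (t + m))).natAbs :=
          sum_le_card_nsmul _ _ _ fun i _ => mostarTerm_root_le_of_even hc ht i (i + 1)
      _ = _ := by simp
  · gcongr
    exact sum_mostarTerm_cycleEdge_le_of_odd hc (s := ⟨t, by omega⟩) (by simp; omega)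
end

section
/- Let T_n be the chain triangular cactus of order n (n triangles in a path-like chain where consecutive triangles share one vertex). Then the edge Mostar index satisfies Mo_e(T_{2k}) = 18k² − 6k and Mo_e(T_{2k+1}) = 18k² + 12k for all k ≥ 1. -/
open Finset

/-- Global index of the `p`-th vertex of the `i`-th cycle in a chain of `n` cycles of
length `c`, where consecutive cycles share one vertex: position `0` of cycle `i` is the
entry cut vertex (identified with position `d` of cycle `i-1`). -/
def chainPos (c d i p : ℕ) : ℕ :=
  if p = 0 then (if i = 0 then 0 else (i - 1) * (c - 1) + d) else i * (c - 1) + p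

/-- The chain cactus consisting of `n` cycles of length `c` in a chain, where consecutive
cycles share exactly one vertex, and the two cut vertices of each internal cycle are at
positions `0` and `d` (hence at distance `min d (c - d)` in the cycle). -/
def cactusChain (n c d : ℕ) : SimpleGraph (Fin (n * (c - 1) + 1)) where
  Adj u v := u ≠ v ∧ ∃ i p q, i < n ∧ p < c ∧ q < c ∧
    ((p + 1) % c = q ∨ (q + 1) % c = p) ∧
    u.val = chainPos c d i p ∧ v.val = chainPos c d i q
  symm := ⟨by
    rintro u v ⟨hne, i, p, q, hi, hp, hq, hpq, hu, hv⟩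
    exact ⟨hne.symm, i, q, p, hi, hq, hp, hpq.symm, hv, hu⟩⟩
  loopless := ⟨fun u h => h.1 rfl⟩
def phiN (a : ℕ) : ℕ := if a % 2 = 1 then a + 1 else a - 1
def dphi (a b : ℕ) : ℕ := (phiN a - phiN b) + (phiN b - phiN a)
def pind (a : ℕ) : ℕ := if a % 2 = 0 ∧ a ≠ 0 then 1 else 0
def DN (a b : ℕ) : ℕ := if a = b then 0 else (dphi a b + pind a + pind b) / 2
def adjN (a b : ℕ) : Prop :=
  a ≠ b ∧ dphi a b ≤ 2 ∧ ¬(pind a = 1 ∧ pind b = 1)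
lemma phiN_char (a : ℕ) :
    (a % 2 = 1 ∧ phiN a = a + 1 ∧ pind a = 0) ∨
    (a % 2 = 0 ∧ a ≠ 0 ∧ phiN a = a - 1 ∧ pind a = 1) ∨
    (a = 0 ∧ phiN a = 0 ∧ pind a = 0) := by
  unfold phiN pind; split_ifs <;> omega
lemma DN_char (a b : ℕ) :
    (a = b ∧ DN a b = 0) ∨
    (a ≠ b ∧ 2 * DN a b = (phiN a - phiN b) + (phiN b - phiN a) + pind a + pind b) := by
  rcases eq_or_ne a b with h | h
  · exact Or.inl ⟨h, by simp [DN, h]⟩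
  · refine Or.inr ⟨h, ?_⟩
    unfold DN dphi
    rw [if_neg h]
    have hpar : ((phiN a - phiN b) + (phiN b - phiN a) + pind a + pind b) % 2 = 0 := by
      rcases phiN_char a with ⟨q,p,r⟩|⟨q,q0,p,r⟩|⟨q,p,r⟩ <;>
      rcases phiN_char b with ⟨q2,p2,r2⟩|⟨q2,q20,p2,r2⟩|⟨q2,p2,r2⟩ <;> omega
    omega
lemma DN_self (a : ℕ) : DN a a = 0 := by simp [DN]
lemma adjN_of {a b : ℕ} (h : a ≠ b ∧ (phiN a - phiN b) + (phiN b - phiN a) ≤ 2 ∧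
    ¬(pind a = 1 ∧ pind b = 1)) : adjN a b := h
lemma DN_eq_zero {a b : ℕ} (h : DN a b = 0) : a = b := by
  have := DN_char a b; have := phiN_char a; have := phiN_char b; omega
set_option maxHeartbeats 1600000 in
lemma DN_lip {a c : ℕ} (h : adjN a c) (b : ℕ) : DN a b ≤ DN c b + 1 := by
  obtain ⟨h1, h2, h3⟩ := h
  unfold dphi at h2
  have d1 := DN_char a b; have d2 := DN_char c b
  have p1 := phiN_char a; have p2 := phiN_char b; have p3 := phiN_char c
  omega
set_option maxHeartbeats 4000000 in
lemma DN_step {n a b : ℕ} (ha : a ≤ 2*n) (hb : b ≤ 2*n) (hab : a ≠ b) :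
    ∃ c ≤ 2*n, adjN a c ∧ DN c b + 1 ≤ DN a b := by
  have p1 := phiN_char a; have p2 := phiN_char b
  have d0 := DN_char a b
  by_cases hpa : a % 2 = 0 ∧ a ≠ 0
  · by_cases hdir : phiN a < phiN b
    · refine ⟨a - 1, by omega, adjN_of ?_, ?_⟩
      · have := phiN_char (a-1); omega
      · have := DN_char (a-1) b; have := phiN_char (a-1); omega
    · refine ⟨a - 3, by omega, adjN_of ?_, ?_⟩
      · have := phiN_char (a-3); omega
      · have := DN_char (a-3) b; have := phiN_char (a-3); omega
  · by_cases hdir : phiN a < phiN b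
    · by_cases hone : phiN b = phiN a + 1
      · exact ⟨b, hb, adjN_of (by omega), by have := DN_self b; omega⟩
      · have hphib : phiN b ≤ 2*n := by omega
        refine ⟨phiN a + 1, by omega, adjN_of ?_, ?_⟩
        · have := phiN_char (phiN a + 1); omega
        · have := DN_char (phiN a + 1) b; have := phiN_char (phiN a + 1); omega
    · by_cases hone : phiN a = phiN b + 1
      · exact ⟨b, hb, adjN_of (by omega), by have := DN_self b; omega⟩
      · refine ⟨a - 2, by omega, adjN_of ?_, ?_⟩
        · have := phiN_char (a-2); omega
        · have := DN_char (a-2) b; have := phiN_char (a-2); omega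
lemma chainPos31 (i p : ℕ) : chainPos 3 1 i p = if p = 0 then i*2 - 1 else i*2 + p := by
  unfold chainPos; split_ifs <;> omega

lemma cactus_adj_def {n : ℕ} (u v : Fin (n*2+1)) :
    (cactusChain n 3 1).Adj u v ↔ (u ≠ v ∧ ∃ i p q, i < n ∧ p < 3 ∧ q < 3 ∧
      ((p + 1) % 3 = q ∨ (q + 1) % 3 = p) ∧
      u.val = chainPos 3 1 i p ∧ v.val = chainPos 3 1 i q) := Iff.rfl

lemma adjN_to_edge {n a b : ℕ} (ha : a ≤ n*2) (hb : b ≤ n*2) (h : adjN a b) :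
    ∃ i p q, i < n ∧ p < 3 ∧ q < 3 ∧ ((p+1)%3 = q ∨ (q+1)%3 = p) ∧
      a = (if p = 0 then i*2-1 else i*2+p) ∧ b = (if q = 0 then i*2-1 else i*2+q) := by
  obtain ⟨hne, hd, hp⟩ := h
  unfold dphi at hd
  have pa := phiN_char a; have pb := phiN_char b
  by_cases ca : a % 2 = 0 ∧ a ≠ 0
  · by_cases hb1 : b = a - 1
    · exact ⟨a/2 - 1, 2, 1, by omega, by omega, by omega, by omega, by simp; omega, by simp; omega⟩
    · exact ⟨a/2 - 1, 2, 0, by omega, by omega, by omega, by omega, by simp; omega, by simp; omega⟩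
  · by_cases cb : b % 2 = 0 ∧ b ≠ 0
    · by_cases ha1 : a = b - 1
      · exact ⟨b/2 - 1, 1, 2, by omega, by omega, by omega, by omega, by simp; omega, by simp; omega⟩
      · exact ⟨b/2 - 1, 0, 2, by omega, by omega, by omega, by omega, by simp; omega, by simp; omega⟩
    · rcases Nat.lt_or_ge a b with hab | hab
      · exact ⟨(a+1)/2, 0, 1, by omega, by omega, by omega, by omega, by simp; omega, by simp; omega⟩
      · exact ⟨(b+1)/2, 1, 0, by omega, by omega, by omega, by omega, by simp; omega, by simp; omega⟩

lemma cactus_adj {n : ℕ} (u v : Fin (n*2+1)) :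
    (cactusChain n 3 1).Adj u v ↔ adjN u.val v.val := by
  rw [cactus_adj_def]
  constructor
  · rintro ⟨hne, i, p, q, hi, hp', hq', hpq, hu, hv⟩
    rw [chainPos31] at hu hv
    have hne' : u.val ≠ v.val := fun h => hne (Fin.ext h)
    have pu := phiN_char u.val; have pv := phiN_char v.val
    refine adjN_of ⟨hne', ?_, ?_⟩ <;>
    · interval_cases p <;> interval_cases q <;> simp at hu hv <;> omega
  · intro h
    have hu : u.val ≤ n*2 := by omega
    have hv : v.val ≤ n*2 := by omega
    obtain ⟨i, p, q, hi, hp', hq', hpq, ha, hb⟩ := adjN_to_edge hu hv h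
    exact ⟨fun he => h.1 (congrArg Fin.val he), i, p, q, hi, hp', hq', hpq,
      by rw [chainPos31]; exact ha, by rw [chainPos31]; exact hb⟩
lemma DN_le_length {n : ℕ} {u v : Fin (n*2+1)} (w : (cactusChain n 3 1).Walk u v) :
    DN u.val v.val ≤ w.length := by
  induction w with
  | nil => simp [DN_self]
  | @cons x y z hadj w' ih =>
      have := DN_lip ((cactus_adj _ _).1 hadj) z.val
      simp only [SimpleGraph.Walk.length_cons]
      omega

lemma exists_walk_DN {n : ℕ} : ∀ (m : ℕ) (u v : Fin (n*2+1)), DN u.val v.val ≤ m →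
    ∃ w : (cactusChain n 3 1).Walk u v, w.length ≤ DN u.val v.val := by
  intro m
  induction m with
  | zero =>
      intro u v h
      have : u = v := Fin.ext (DN_eq_zero (by omega))
      subst this
      exact ⟨SimpleGraph.Walk.nil, by simp [DN_self]⟩
  | succ m ih =>
      intro u v h
      by_cases huv : u = v
      · subst huv; exact ⟨SimpleGraph.Walk.nil, by simp [DN_self]⟩
      · have hne : u.val ≠ v.val := fun he => huv (Fin.ext he)
        obtain ⟨c, hc, hadj, hlt⟩ := DN_step (n := n) (by omega) (by omega) hne
        have hcf : c < n*2+1 := by omega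
        set C : Fin (n*2+1) := ⟨c, hcf⟩ with hC
        have hCv : C.val = c := rfl
        have hadj' : (cactusChain n 3 1).Adj u C := (cactus_adj u C).2 hadj
        obtain ⟨w', hw'⟩ := ih C v (by rw [hCv]; omega)
        rw [hCv] at hw'
        exact ⟨SimpleGraph.Walk.cons hadj' w', by simp only [SimpleGraph.Walk.length_cons]; omega⟩

lemma dist_DN {n : ℕ} (u v : Fin (n*2+1)) :
    (cactusChain n 3 1).dist u v = DN u.val v.val := by
  obtain ⟨w, hw⟩ := exists_walk_DN (DN u.val v.val) u v le_rfl
  refine le_antisymm (le_trans (SimpleGraph.dist_le w) hw) ?_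
  obtain ⟨p, hp⟩ := w.reachable.exists_walk_length_eq_dist
  rw [← hp]
  exact DN_le_length p
/-- endpoints (as labels) of edge `t` of triangle `j`. -/
def epN (j t : ℕ) : ℕ × ℕ :=
  if t = 0 then (j*2-1, (j+1)*2-1) else if t = 1 then (j*2-1, j*2+2) else ((j+1)*2-1, j*2+2)

def fv (n x : ℕ) : Fin (n*2+1) := ⟨min x (n*2), by omega⟩

def encE (n j t : ℕ) : Sym2 (Fin (n*2+1)) := s(fv n (epN j t).1, fv n (epN j t).2)

lemma fv_val {n x : ℕ} (h : x ≤ n*2) : (fv n x).val = x := by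
  simp only [fv]; omega

lemma fv_eq {n x : ℕ} (h : x ≤ n*2) {u : Fin (n*2+1)} (hu : u.val = x) : u = fv n x :=
  Fin.ext (by rw [fv_val h, hu])

lemma epN_le {j t n : ℕ} (hj : j < n) : (epN j t).1 ≤ n*2 ∧ (epN j t).2 ≤ n*2 := by
  unfold epN; split_ifs <;> exact ⟨by omega, by omega⟩

lemma adjN_to_enc {n a b : ℕ} (ha : a ≤ n*2) (hb : b ≤ n*2) (h : adjN a b) :
    ∃ j < n, ∃ t < 3, ((a, b) = epN j t ∨ (b, a) = epN j t) := by
  obtain ⟨hne, hd, hp⟩ := h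
  unfold dphi at hd
  have pa := phiN_char a; have pb := phiN_char b
  unfold epN
  by_cases ca : a % 2 = 0 ∧ a ≠ 0
  · by_cases hb1 : b = a - 1
    · exact ⟨a/2 - 1, by omega, 2, by omega, Or.inr (by norm_num; omega)⟩
    · exact ⟨a/2 - 1, by omega, 1, by omega, Or.inr (by norm_num; omega)⟩
  · by_cases cb : b % 2 = 0 ∧ b ≠ 0
    · by_cases ha1 : a = b - 1
      · exact ⟨b/2 - 1, by omega, 2, by omega, Or.inl (by norm_num; omega)⟩
      · exact ⟨b/2 - 1, by omega, 1, by omega, Or.inl (by norm_num; omega)⟩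
    · rcases Nat.lt_or_ge a b with hab | hab
      · exact ⟨(a+1)/2, by omega, 0, by omega, Or.inl (by norm_num; omega)⟩
      · exact ⟨(b+1)/2, by omega, 0, by omega, Or.inr (by norm_num; omega)⟩

lemma adj_encE {n j t : ℕ} (hj : j < n) (ht : t < 3) :
    (cactusChain n 3 1).Adj (fv n (epN j t).1) (fv n (epN j t).2) := by
  rw [cactus_adj, fv_val (epN_le hj).1, fv_val (epN_le hj).2]
  have pa := phiN_char (epN j t).1
  have pb := phiN_char (epN j t).2
  refine adjN_of ?_
  unfold epN at *
  interval_cases t <;> norm_num at pa pb ⊢ <;> omega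

lemma mem_edge {n : ℕ} (e : Sym2 (Fin (n*2+1))) :
    e ∈ (cactusChain n 3 1).edgeSet ↔ ∃ j < n, ∃ t < 3, e = encE n j t := by
  induction e with
  | _ u v =>
    constructor
    · intro h
      have h' := (cactus_adj u v).1 ((SimpleGraph.mem_edgeSet _).1 h)
      obtain ⟨j, hj, t, ht, hor⟩ := adjN_to_enc (n := n) (by omega) (by omega) h'
      refine ⟨j, hj, t, ht, ?_⟩
      rcases hor with heq | heq
      · rw [encE, fv_eq (epN_le hj).1 (show u.val = (epN j t).1 by rw [← heq]),
            fv_eq (epN_le hj).2 (show v.val = (epN j t).2 by rw [← heq])]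
      · rw [encE, Sym2.eq_swap,
            fv_eq (epN_le hj).1 (show v.val = (epN j t).1 by rw [← heq]),
            fv_eq (epN_le hj).2 (show u.val = (epN j t).2 by rw [← heq])]
    · rintro ⟨j, hj, t, ht, he⟩
      rw [he, encE, SimpleGraph.mem_edgeSet]
      exact adj_encE hj ht
lemma encE_inj {n j t j' t' : ℕ} (hj : j < n) (ht : t < 3) (hj' : j' < n) (ht' : t' < 3)
    (h : encE n j t = encE n j' t') : j = j' ∧ t = t' := by
  rw [encE, encE, Sym2.eq_iff] at h
  rcases h with ⟨h1, h2⟩ | ⟨h1, h2⟩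
  · have g1 := congrArg Fin.val h1
    have g2 := congrArg Fin.val h2
    rw [fv_val (epN_le hj).1, fv_val (epN_le hj').1] at g1
    rw [fv_val (epN_le hj).2, fv_val (epN_le hj').2] at g2
    unfold epN at g1 g2
    interval_cases t <;> interval_cases t' <;> norm_num at g1 g2 <;> omega
  · have g1 := congrArg Fin.val h1
    have g2 := congrArg Fin.val h2
    rw [fv_val (epN_le hj).1, fv_val (epN_le hj').2] at g1
    rw [fv_val (epN_le hj).2, fv_val (epN_le hj').1] at g2
    unfold epN at g1 g2
    interval_cases t <;> interval_cases t' <;> norm_num at g1 g2 <;> omega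

lemma edgeFinset_eq (n : ℕ) {inst : Fintype ((cactusChain n 3 1).edgeSet)} :
    @SimpleGraph.edgeFinset _ (cactusChain n 3 1) inst =
      (Finset.range n ×ˢ Finset.range 3).image (fun jt => encE n jt.1 jt.2) := by
  ext e
  rw [SimpleGraph.mem_edgeFinset, mem_edge]
  simp only [Finset.mem_image, Finset.mem_product, Finset.mem_range]
  constructor
  · rintro ⟨j, hj, t, ht, rfl⟩; exact ⟨(j, t), ⟨hj, ht⟩, rfl⟩
  · rintro ⟨⟨j, t⟩, ⟨hj, ht⟩, rfl⟩; exact ⟨j, hj, t, ht, rfl⟩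

lemma emostar_eq_sum (n : ℕ) :
    emostar (cactusChain n 3 1) =
      ∑ jt ∈ Finset.range n ×ˢ Finset.range 3,
        emostarTerm (cactusChain n 3 1) (encE n jt.1 jt.2) := by
  unfold emostar
  rw [edgeFinset_eq n]
  rw [Finset.sum_image]
  rintro ⟨j, t⟩ hjt ⟨j', t'⟩ hjt' h
  simp only [Finset.mem_coe, Finset.mem_product, Finset.mem_range] at hjt hjt'
  have := encE_inj hjt.1 hjt.2 hjt'.1 hjt'.2 h
  simp [Prod.ext_iff, this.1, this.2]

def eedN (w j t : ℕ) : ℕ := min (DN (epN j t).1 w) (DN (epN j t).2 w)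

lemma ved_encE {n : ℕ} (w : Fin (n*2+1)) {j t : ℕ} (hj : j < n) :
    vertexEdgeDist (cactusChain n 3 1) w (encE n j t) = eedN w.val j t := by
  rw [encE, vertexEdgeDist, Sym2.lift_mk]
  dsimp only
  rw [dist_DN, dist_DN, fv_val (epN_le hj).1, fv_val (epN_le hj).2]
  rfl

lemma count_formula {n : ℕ} (u v : Fin (n*2+1)) :
    edgeCloserCount (cactusChain n 3 1) u v =
      ((Finset.range n ×ˢ Finset.range 3).filter
        (fun jt => eedN u.val jt.1 jt.2 < eedN v.val jt.1 jt.2)).card := by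
  classical
  rw [edgeCloserCount, Nat.card_eq_fintype_card, Fintype.card_subtype]
  rw [show Finset.univ.filter (fun e => e ∈ (cactusChain n 3 1).edgeSet ∧
        vertexEdgeDist (cactusChain n 3 1) u e < vertexEdgeDist (cactusChain n 3 1) v e) =
      ((Finset.range n ×ˢ Finset.range 3).filter
        (fun jt => eedN u.val jt.1 jt.2 < eedN v.val jt.1 jt.2)).image
        (fun jt => encE n jt.1 jt.2) from ?_]
  · apply Finset.card_image_of_injOn
    rintro ⟨j, t⟩ hjt ⟨j', t'⟩ hjt' h
    simp only [Finset.mem_coe, Finset.mem_filter, Finset.mem_product, Finset.mem_range] at hjt hjt'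
    have := encE_inj hjt.1.1 hjt.1.2 hjt'.1.1 hjt'.1.2 h
    simp [Prod.ext_iff, this.1, this.2]
  · ext e
    simp only [Finset.mem_filter, Finset.mem_univ, true_and, Finset.mem_image,
      Finset.mem_product, Finset.mem_range]
    constructor
    · rintro ⟨hmem, hlt⟩
      obtain ⟨j, hj, t, ht, rfl⟩ := (mem_edge e).1 hmem
      refine ⟨(j, t), ⟨⟨hj, ht⟩, ?_⟩, rfl⟩
      rwa [ved_encE u hj, ved_encE v hj] at hlt
    · rintro ⟨⟨j, t⟩, ⟨⟨hj, ht⟩, hlt⟩, rfl⟩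
      refine ⟨(mem_edge _).2 ⟨j, hj, t, ht, rfl⟩, ?_⟩
      rwa [ved_encE u hj, ved_encE v hj]
lemma DN_comm (a b : ℕ) : DN a b = DN b a := by
  have := DN_char a b; have := DN_char b a; omega

lemma DN_ll (i j : ℕ) : DN (i*2-1) (j*2-1) = (i - j) + (j - i) := by
  have := DN_char (i*2-1) (j*2-1); have := phiN_char (i*2-1); have := phiN_char (j*2-1); omega

lemma DN_lc (m j : ℕ) : DN (m*2-1) (j*2+2) = (j+1-m) + ((m-j) - (j+1-m)) := by
  have := DN_char (m*2-1) (j*2+2); have := phiN_char (m*2-1); have := phiN_char (j*2+2); omega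

lemma DN_cl (j m : ℕ) : DN (j*2+2) (m*2-1) = (j+1-m) + ((m-j) - (j+1-m)) := by
  rw [DN_comm]; exact DN_lc m j

lemma DN_cc (i j : ℕ) :
    (i = j ∧ DN (i*2+2) (j*2+2) = 0) ∨ (i ≠ j ∧ DN (i*2+2) (j*2+2) = (i-j)+(j-i)+1) := by
  have := DN_char (i*2+2) (j*2+2); have := phiN_char (i*2+2); have := phiN_char (j*2+2); omega
section counts
open Finset

lemma count0u {n i : ℕ} (hi : i < n) :
    ((range n ×ˢ range 3).filter
      (fun jt => eedN (i*2-1) jt.1 jt.2 < eedN ((i+1)*2-1) jt.1 jt.2)).card = 3*i+1 := by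
  have hset : ((range n ×ˢ range 3).filter
      (fun jt => eedN (i*2-1) jt.1 jt.2 < eedN ((i+1)*2-1) jt.1 jt.2))
      = (range i ×ˢ range 3) ∪ {(i, 1)} := by
    ext ⟨j, t⟩
    simp only [mem_filter, mem_product, mem_range, mem_union, mem_singleton, Prod.mk.injEq]
    rcases Nat.lt_or_ge t 3 with ht | ht
    · interval_cases t <;>
      · simp only [eedN, epN]
        norm_num
        have h1 := DN_ll j i; have h2 := DN_ll (j+1) i
        have h3 := DN_ll j (i+1); have h4 := DN_ll (j+1) (i+1)
        have h5 := DN_cl j i; have h6 := DN_cl j (i+1)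
        omega
    · exact iff_of_false (by rintro ⟨⟨_, h3⟩, _⟩; omega)
        (by rintro (⟨_, h3⟩ | ⟨_, h3⟩) <;> omega)
  rw [hset, Finset.card_union_of_disjoint (by simp), Finset.card_product]
  simp; ring

lemma count0v {n i : ℕ} (hi : i < n) :
    ((range n ×ˢ range 3).filter
      (fun jt => eedN ((i+1)*2-1) jt.1 jt.2 < eedN (i*2-1) jt.1 jt.2)).card = 3*(n-1-i)+1 := by
  have hset : ((range n ×ˢ range 3).filter
      (fun jt => eedN ((i+1)*2-1) jt.1 jt.2 < eedN (i*2-1) jt.1 jt.2))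
      = ((Ico (i+1) n) ×ˢ range 3) ∪ {(i, 2)} := by
    ext ⟨j, t⟩
    simp only [mem_filter, mem_product, mem_range, mem_union, mem_singleton, Prod.mk.injEq,
      mem_Ico]
    rcases Nat.lt_or_ge t 3 with ht | ht
    · interval_cases t <;>
      · simp only [eedN, epN]
        norm_num
        have h1 := DN_ll j i; have h2 := DN_ll (j+1) i
        have h3 := DN_ll j (i+1); have h4 := DN_ll (j+1) (i+1)
        have h5 := DN_cl j i; have h6 := DN_cl j (i+1)
        omega
    · exact iff_of_false (by rintro ⟨⟨_, h3⟩, _⟩; omega)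
        (by rintro (⟨⟨_, _⟩, h3⟩ | ⟨_, h3⟩) <;> omega)
  rw [hset, Finset.card_union_of_disjoint (by simp), Finset.card_product]
  simp [Nat.card_Ico]; omega

lemma count1u {n i : ℕ} (hi : i < n) :
    ((range n ×ˢ range 3).filter
      (fun jt => eedN (i*2-1) jt.1 jt.2 < eedN (i*2+2) jt.1 jt.2)).card = 3*i+1 := by
  have hset : ((range n ×ˢ range 3).filter
      (fun jt => eedN (i*2-1) jt.1 jt.2 < eedN (i*2+2) jt.1 jt.2))
      = (range i ×ˢ range 3) ∪ {(i, 0)} := by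
    ext ⟨j, t⟩
    simp only [mem_filter, mem_product, mem_range, mem_union, mem_singleton, Prod.mk.injEq]
    rcases Nat.lt_or_ge t 3 with ht | ht
    · interval_cases t <;>
      · simp only [eedN, epN]
        norm_num
        have h1 := DN_ll j i; have h2 := DN_ll (j+1) i; have h5 := DN_cl j i
        have h3 := DN_lc j i; have h4 := DN_lc (j+1) i; have h6 := DN_cc j i
        omega
    · exact iff_of_false (by rintro ⟨⟨_, h3⟩, _⟩; omega)
        (by rintro (⟨_, h3⟩ | ⟨_, h3⟩) <;> omega)
  rw [hset, Finset.card_union_of_disjoint (by simp), Finset.card_product]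
  simp; ring

lemma count1v {n i : ℕ} (hi : i < n) :
    ((range n ×ˢ range 3).filter
      (fun jt => eedN (i*2+2) jt.1 jt.2 < eedN (i*2-1) jt.1 jt.2)).card = 1 := by
  have hset : ((range n ×ˢ range 3).filter
      (fun jt => eedN (i*2+2) jt.1 jt.2 < eedN (i*2-1) jt.1 jt.2)) = {(i, 2)} := by
    ext ⟨j, t⟩
    simp only [mem_filter, mem_product, mem_range, mem_singleton, Prod.mk.injEq]
    rcases Nat.lt_or_ge t 3 with ht | ht
    · interval_cases t <;>
      · simp only [eedN, epN]
        norm_num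
        have h1 := DN_ll j i; have h2 := DN_ll (j+1) i; have h5 := DN_cl j i
        have h3 := DN_lc j i; have h4 := DN_lc (j+1) i; have h6 := DN_cc j i
        omega
    · exact iff_of_false (by rintro ⟨⟨_, h3⟩, _⟩; omega) (by rintro ⟨_, h3⟩; omega)
  rw [hset]; simp

lemma count2u {n i : ℕ} (hi : i < n) :
    ((range n ×ˢ range 3).filter
      (fun jt => eedN ((i+1)*2-1) jt.1 jt.2 < eedN (i*2+2) jt.1 jt.2)).card = 3*(n-1-i)+1 := by
  have hset : ((range n ×ˢ range 3).filter
      (fun jt => eedN ((i+1)*2-1) jt.1 jt.2 < eedN (i*2+2) jt.1 jt.2))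
      = ((Ico (i+1) n) ×ˢ range 3) ∪ {(i, 0)} := by
    ext ⟨j, t⟩
    simp only [mem_filter, mem_product, mem_range, mem_union, mem_singleton, Prod.mk.injEq,
      mem_Ico]
    rcases Nat.lt_or_ge t 3 with ht | ht
    · interval_cases t <;>
      · simp only [eedN, epN]
        norm_num
        have h1 := DN_ll j (i+1); have h2 := DN_ll (j+1) (i+1); have h5 := DN_cl j (i+1)
        have h3 := DN_lc j i; have h4 := DN_lc (j+1) i; have h6 := DN_cc j i
        omega
    · exact iff_of_false (by rintro ⟨⟨_, h3⟩, _⟩; omega)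
        (by rintro (⟨⟨_, _⟩, h3⟩ | ⟨_, h3⟩) <;> omega)
  rw [hset, Finset.card_union_of_disjoint (by simp), Finset.card_product]
  simp [Nat.card_Ico]; omega

lemma count2v {n i : ℕ} (hi : i < n) :
    ((range n ×ˢ range 3).filter
      (fun jt => eedN (i*2+2) jt.1 jt.2 < eedN ((i+1)*2-1) jt.1 jt.2)).card = 1 := by
  have hset : ((range n ×ˢ range 3).filter
      (fun jt => eedN (i*2+2) jt.1 jt.2 < eedN ((i+1)*2-1) jt.1 jt.2)) = {(i, 1)} := by
    ext ⟨j, t⟩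
    simp only [mem_filter, mem_product, mem_range, mem_singleton, Prod.mk.injEq]
    rcases Nat.lt_or_ge t 3 with ht | ht
    · interval_cases t <;>
      · simp only [eedN, epN]
        norm_num
        have h1 := DN_ll j (i+1); have h2 := DN_ll (j+1) (i+1); have h5 := DN_cl j (i+1)
        have h3 := DN_lc j i; have h4 := DN_lc (j+1) i; have h6 := DN_cc j i
        omega
    · exact iff_of_false (by rintro ⟨⟨_, h3⟩, _⟩; omega) (by rintro ⟨_, h3⟩; omega)
  rw [hset]; simp

end counts
section final
open Finset

lemma term_encE {n i : ℕ} (hi : i < n) :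
    emostarTerm (cactusChain n 3 1) (encE n i 0)
        = (3*i - 3*(n-1-i)) + (3*(n-1-i) - 3*i) ∧
    emostarTerm (cactusChain n 3 1) (encE n i 1) = 3*i ∧
    emostarTerm (cactusChain n 3 1) (encE n i 2) = 3*(n-1-i) := by
  refine ⟨?_, ?_, ?_⟩ <;>
  · rw [encE, emostarTerm, Sym2.lift_mk]
    dsimp only
    rw [count_formula, count_formula]
    simp only [epN]
    norm_num
    rw [fv_val (by omega), fv_val (by omega)]
    first
    | rw [count0u hi, count0v hi]
    | rw [count1u hi, count1v hi]
    | rw [count2u hi, count2v hi]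
    omega

lemma emostar_cactus (n : ℕ) :
    emostar (cactusChain n 3 1) =
      ∑ i ∈ range n,
        ((3*i - 3*(n-1-i)) + (3*(n-1-i) - 3*i) + (3*i + 3*(n-1-i))) := by
  rw [emostar_eq_sum, Finset.sum_product]
  refine Finset.sum_congr rfl fun i hi => ?_
  rw [Finset.mem_range] at hi
  have h := term_encE (n := n) hi
  have e3 : ∀ g : ℕ → ℕ, ∑ y ∈ range 3, g y = g 0 + g 1 + g 2 := fun g => by
    rw [Finset.sum_range_succ, Finset.sum_range_succ, Finset.sum_range_one]
  rw [e3]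
  dsimp only
  rw [h.1, h.2.1, h.2.2]
  omega

def Sval (n : ℕ) : ℕ :=
  ∑ i ∈ range n, ((3*i - 3*(n-1-i)) + (3*(n-1-i) - 3*i) + (3*i + 3*(n-1-i)))

lemma Sval_rec (n : ℕ) : Sval (n+2) = Sval n + 18*n + 12 := by
  unfold Sval
  rw [Finset.sum_range_succ, Finset.sum_range_succ']
  have hcong : ∀ i ∈ range n,
      (3*(i+1) - 3*(n+2-1-(i+1))) + (3*(n+2-1-(i+1)) - 3*(i+1)) + (3*(i+1) + 3*(n+2-1-(i+1)))
      = ((3*i - 3*(n-1-i)) + (3*(n-1-i) - 3*i) + (3*i + 3*(n-1-i))) + 6 := by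
    intro i hi; rw [Finset.mem_range] at hi; omega
  rw [Finset.sum_congr rfl hcong, Finset.sum_add_distrib, Finset.sum_const, Finset.card_range]
  simp only [smul_eq_mul]
  omega

lemma Sval_even (k : ℕ) : Sval (2*k) = 18*k^2 - 6*k := by
  induction k with
  | zero => simp [Sval]
  | succ m ih =>
      have h := Sval_rec (2*m)
      have h2 : 2*(m+1) = 2*m+2 := by ring
      have hsq : (m+1)^2 = m^2 + 2*m + 1 := by ring
      have h3 : m ≤ m^2 := by nlinarith
      rw [h2, h, ih]
      omega

lemma Sval_odd (k : ℕ) : Sval (2*k+1) = 18*k^2 + 12*k := by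
  induction k with
  | zero => simp [Sval]
  | succ m ih =>
      have h := Sval_rec (2*m+1)
      have h2 : 2*(m+1)+1 = (2*m+1)+2 := by ring
      have hsq : (m+1)^2 = m^2 + 2*m + 1 := by ring
      have h3 : m ≤ m^2 := by nlinarith
      rw [h2, h, ih]
      omega

end final
theorem emostar_chainTriangular (k : ℕ) (hk : 1 ≤ k) :
    emostar (cactusChain (2 * k) 3 1) = 18 * k ^ 2 - 6 * k ∧
    emostar (cactusChain (2 * k + 1) 3 1) = 18 * k ^ 2 + 12 * k := by
  constructor
  · rw [emostar_cactus (2*k)]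
    exact Sval_even k
  · rw [emostar_cactus (2*k+1)]
    exact Sval_odd k
end

section
/- Let Q_n be the para-chain square cactus of order n (n four-cycles in a chain, consecutive squares sharing one vertex, shared vertices opposite in each square). Then Mo_e(Q_{2k}) = 32k² and Mo_e(Q_{2k+1}) = 32k² + 32k for all k ≥ 1. -/
open Finset

/-! Number the levels of `Q_n` from its left end: the cut vertex shared by squares `c - 1` and `c`
lies on level `2c`, the two other vertices of square `a` on level `2a + 1`. Two vertices are
adjacent exactly when their levels differ by one, so distances are differences of levels, except
that the two middle vertices of a square are at distance 2. For an edge of square `j`, the edges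
strictly closer to its cut-vertex end are the `4` edges of each square beyond that cut vertex and
the other edge of square `j` at that cut vertex; symmetrically at the other end. So each of the
four edges of square `j` contributes `4 |j - (n - 1 - j)|`, and summing over `j` gives
`Mo_e(Q_n) = 16 ⌊n² / 2⌋`. -/

namespace SimpleGraph

variable {V : Type*} {G : SimpleGraph V}

theorem dist_eq_of_adj_le_of_exists_adj_lt (f : V → V → ℕ) (hself : ∀ v, f v v = 0)
    (hadj : ∀ u w v, G.Adj u w → f u v ≤ f w v + 1)
    (hdesc : ∀ u v, u ≠ v → ∃ w, G.Adj u w ∧ f w v < f u v) (u v : V) :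
    G.dist u v = f u v := by
  have le_length : ∀ {u : V} (p : G.Walk u v), f u v ≤ p.length := by
    intro u p
    induction p with
    | nil => simp [hself]
    | cons h p ih => rw [Walk.length_cons]; exact (hadj _ _ _ h).trans (by omega)
  have exists_walk : ∀ m u, f u v = m → ∃ p : G.Walk u v, p.length ≤ m := by
    intro m
    induction m using Nat.strong_induction_on with
    | _ m ih =>
      intro u hu
      by_cases huv : u = v
      · subst huv; exact ⟨Walk.nil, Nat.zero_le _⟩
      · obtain ⟨w, hw, hlt⟩ := hdesc u v huv
        obtain ⟨p, hp⟩ := ih _ (hu ▸ hlt) w rfl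
        exact ⟨Walk.cons hw p, by rw [Walk.length_cons]; omega⟩
  obtain ⟨p, hp⟩ := exists_walk _ u rfl
  obtain ⟨q, hq⟩ := Reachable.exists_walk_length_eq_dist ⟨p⟩
  exact le_antisymm ((dist_le p).trans hp) (hq ▸ le_length q)

def levelDist [DecidableEq V] (lev : V → ℕ) (u v : V) : ℕ :=
  if u = v then 0 else if lev u = lev v then 2 else Nat.dist (lev u) (lev v)

theorem dist_eq_levelDist [DecidableEq V] (lev : V → ℕ)
    (hadj : ∀ u v, G.Adj u v ↔ lev u + 1 = lev v ∨ lev v + 1 = lev u)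
    (hlevel : ∀ u, ∀ l ≤ lev u, ∃ w, lev w = l)
    (hbot : ∀ u v, lev u = 0 → lev v = 0 → u = v) (u v : V) :
    G.dist u v = levelDist lev u v := by
  refine dist_eq_of_adj_le_of_exists_adj_lt (levelDist lev) (fun v => if_pos rfl) ?_ ?_ u v
  · intro u w v h
    rw [hadj] at h
    unfold levelDist Nat.dist
    split_ifs <;> subst_vars <;> omega
  · intro u v huv
    have hpos : lev u = lev v → lev u ≠ 0 := fun h h0 => huv (hbot u v h0 (h ▸ h0))
    obtain ⟨l, hstep, hl, hcloser⟩ : ∃ l, (lev u + 1 = l ∨ l + 1 = lev u) ∧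
        (l ≤ lev u ∨ l ≤ lev v) ∧
        (l = lev v ∨
          Nat.dist l (lev v) < if lev u = lev v then 2 else Nat.dist (lev u) (lev v)) := by
      -- one level towards `v`, or down from `v`'s own level (not level 0, by `hbot`)
      refine ⟨if lev u < lev v then lev u + 1 else lev u - 1, ?_⟩
      unfold Nat.dist
      split_ifs <;> omega
    have huv_dist : levelDist lev u v = if lev u = lev v then 2 else Nat.dist (lev u) (lev v) :=
      if_neg huv
    by_cases hlv : l = lev v
    · refine ⟨v, (hadj u v).2 (hlv ▸ hstep), ?_⟩
      rw [huv_dist, levelDist, if_pos rfl, if_neg (by omega)]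
      unfold Nat.dist
      omega
    · obtain ⟨w, rfl⟩ := hl.elim (hlevel u l) (hlevel v l)
      refine ⟨w, (hadj u w).2 hstep, ?_⟩
      rw [huv_dist, levelDist, if_neg (by rintro rfl; exact hlv rfl), if_neg hlv]
      exact hcloser.resolve_left hlv

theorem emostar_eq_sum_of_edgeSet_eq_image [Finite V] {ι : Type*} {I : Finset ι}
    {f : ι → Sym2 V} (hG : G.edgeSet = f '' I) (hf : Set.InjOn f I) :
    emostar G = ∑ i ∈ I, emostarTerm G (f i) := by
  classical
  have hfin : ∀ (_ : Fintype G.edgeSet), G.edgeFinset = I.image f := by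
    intro _
    ext e
    simp [hG]
  unfold emostar
  rw [hfin, sum_image hf]

end SimpleGraph

theorem Nat.card_mem_image_and_eq_card_filter {α ι : Type*} {I : Finset ι} {f : ι → α}
    (hf : Set.InjOn f I) (Q : α → Prop) [DecidablePred Q] :
    Nat.card {a // a ∈ f '' I ∧ Q a} = #(I.filter fun i => Q (f i)) := by
  have himage : {a | a ∈ f '' I ∧ Q a} = f '' ↑(I.filter fun i => Q (f i)) := by
    ext a
    simp only [coe_filter]
    constructor
    · rintro ⟨⟨i, hi, rfl⟩, hQ⟩
      exact ⟨i, ⟨hi, hQ⟩, rfl⟩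
    · rintro ⟨i, ⟨hi, hQ⟩, rfl⟩
      exact ⟨⟨i, hi, rfl⟩, hQ⟩
  rw [← Set.ncard_coe_finset, ← (hf.mono (coe_subset.2 (filter_subset _ _))).ncard_image,
    ← himage]
  exact Nat.card_coe_set_eq _

namespace ParaSquare

/-- Level of the vertex with index `v` of `cactusChain n 4 2`: index `3c - 1` is the cut vertex
shared by squares `c - 1` and `c`, indices `3a + 1` and `3a + 3` the other two vertices of square
`a`. Truncated subtraction puts the end vertex `0` on level `0`. -/
def level (v : ℕ) : ℕ :=
  if v % 3 = 0 then 2 * (v / 3) - 1 else 2 * (v / 3) + v % 3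

lemma level_chainPos (i p : ℕ) (hp : p < 4) :
    level (chainPos 4 2 i p) = 2 * i + min p (4 - p) := by
  unfold level chainPos
  split_ifs <;> omega

lemma exists_chainPos {x i : ℕ} (h₁ : 2 * i ≤ level x) (h₂ : level x ≤ 2 * i + 2) :
    ∃ p < 4, x = chainPos 4 2 i p := by
  refine ⟨if level x = 2 * i then 0 else if level x = 2 * i + 2 then 2 else x - 3 * i, ?_⟩
  unfold level chainPos at *
  split_ifs at * <;> omega

lemma level_le {n x : ℕ} (hx : x < n * 3 + 1) : level x ≤ 2 * n := by
  unfold level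
  split_ifs <;> omega

variable {n : ℕ}

lemma adj_iff {u v : Fin (n * 3 + 1)} :
    (cactusChain n 4 2).Adj u v ↔ level u + 1 = level v ∨ level v + 1 = level u := by
  constructor
  · rintro ⟨-, i, p, q, -, hp, hq, hpq, hu, hv⟩
    rw [hu, hv, level_chainPos i p hp, level_chainPos i q hq]
    omega
  · intro h
    have hu_le := level_le u.isLt
    have hv_le := level_le v.isLt
    -- both endpoints lie in square `i`
    obtain ⟨i, hi⟩ : ∃ i, i = min (level u) (level v) / 2 := ⟨_, rfl⟩
    obtain ⟨p, hp, hpu⟩ := exists_chainPos (x := u) (i := i) (by omega) (by omega)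
    obtain ⟨q, hq, hqv⟩ := exists_chainPos (x := v) (i := i) (by omega) (by omega)
    have hp' := level_chainPos i p hp
    have hq' := level_chainPos i q hq
    rw [← hpu] at hp'
    rw [← hqv] at hq'
    exact ⟨by rintro rfl; omega, i, p, q, by omega, hp, hq, by omega, hpu, hqv⟩

lemma dist_eq (u v : Fin (n * 3 + 1)) :
    (cactusChain n 4 2).dist u v =
      SimpleGraph.levelDist (fun w : Fin (n * 3 + 1) => level w) u v := by
  refine SimpleGraph.dist_eq_levelDist _ (fun _ _ => adj_iff) (fun u l hl => ?_)
    (fun u v hu hv => ?_) u v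
  · have := level_le u.isLt
    refine ⟨⟨if l % 2 = 0 then 3 * (l / 2) - 1 else 3 * (l / 2) + 1, by split_ifs <;> omega⟩,
      ?_⟩
    dsimp only
    unfold level
    split_ifs <;> omega
  · unfold level at hu hv
    ext
    split_ifs at hu hv <;> omega

/-- Reduction mod `3n + 1` only makes `vertex`, `side`, `cut` and `edge` total. -/
def vertex (n v : ℕ) : Fin (n * 3 + 1) := Fin.ofNat _ v

def side (n a s : ℕ) : Fin (n * 3 + 1) := vertex n (3 * a + 1 + 2 * s)

def cut (n c : ℕ) : Fin (n * 3 + 1) := vertex n (3 * c - 1)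

def edge (n : ℕ) (x : ℕ × ℕ × ℕ) : Sym2 (Fin (n * 3 + 1)) :=
  s(side n x.1 x.2.1, cut n (x.1 + x.2.2))

def edgeIndex (n : ℕ) : Finset (ℕ × ℕ × ℕ) := range n ×ˢ range 2 ×ˢ range 2

lemma mem_edgeIndex {a s b : ℕ} : (a, s, b) ∈ edgeIndex n ↔ a < n ∧ s ≤ 1 ∧ b ≤ 1 := by
  simp only [edgeIndex, mem_product, mem_range]
  omega

lemma val_vertex {v : ℕ} (hv : v < n * 3 + 1) : (vertex n v).val = v :=
  Nat.mod_eq_of_lt hv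

lemma level_side (a : ℕ) {s : ℕ} (hs : s ≤ 1) : level (3 * a + 1 + 2 * s) = 2 * a + 1 := by
  unfold level
  interval_cases s <;> split_ifs <;> omega

lemma level_cut (c : ℕ) : level (3 * c - 1) = 2 * c := by
  unfold level
  split_ifs <;> omega

lemma edgeSet_eq : (cactusChain n 4 2).edgeSet = edge n '' edgeIndex n := by
  ext e
  induction e using Sym2.ind with
  | _ u v =>
    simp only [SimpleGraph.mem_edgeSet, Set.mem_image, Finset.mem_coe]
    constructor
    · rintro ⟨-, i, p, q, hi, hp, hq, hpq, hu, hv⟩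
      have vertex_eq : ∀ w : Fin (n * 3 + 1), vertex n w = w := fun w =>
        Fin.ext (val_vertex w.isLt)
      unfold chainPos at hu hv
      -- positions `1, 3` of a square are its side vertices, `0, 2` its cut vertices
      rcases Nat.mod_two_eq_zero_or_one p with hp2 | hp2
      · refine ⟨(i, q / 2, p / 2), mem_edgeIndex.2 ⟨hi, by omega, by omega⟩, ?_⟩
        show s(side n i (q / 2), cut n (i + p / 2)) = s(u, v)
        rw [Sym2.eq_swap, side, cut, ← vertex_eq u, ← vertex_eq v]
        congr 2 <;> split_ifs at hu hv <;> omega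
      · refine ⟨(i, p / 2, q / 2), mem_edgeIndex.2 ⟨hi, by omega, by omega⟩, ?_⟩
        show s(side n i (p / 2), cut n (i + q / 2)) = s(u, v)
        rw [side, cut, ← vertex_eq u, ← vertex_eq v]
        congr 2 <;> split_ifs at hu hv <;> omega
    · rintro ⟨⟨a, s, b⟩, hx, he⟩
      rw [mem_edgeIndex] at hx
      rw [← SimpleGraph.mem_edgeSet, ← he, edge, SimpleGraph.mem_edgeSet]
      dsimp only
      rw [side, cut, adj_iff, val_vertex (by omega), val_vertex (by omega),
        level_side a hx.2.1, level_cut]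
      omega

lemma edge_injOn : Set.InjOn (edge n) (edgeIndex n) := by
  rintro ⟨a, s, b⟩ hx ⟨a', s', b'⟩ hx' he
  simp only [Finset.mem_coe, mem_edgeIndex] at hx hx'
  simp only [edge, side, cut, Sym2.eq_iff, Fin.ext_iff] at he
  rw [val_vertex (by omega), val_vertex (by omega), val_vertex (by omega),
    val_vertex (by omega)] at he
  simp only [Prod.mk.injEq]
  omega

lemma dist_vertex {x y : ℕ} (hx : x < n * 3 + 1) (hy : y < n * 3 + 1) :
    (cactusChain n 4 2).dist (vertex n x) (vertex n y) = SimpleGraph.levelDist level x y := by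
  simp only [dist_eq, SimpleGraph.levelDist, Fin.ext_iff, val_vertex hx, val_vertex hy]

lemma vertexEdgeDist_edge {y a s b : ℕ} (hy : y < n * 3 + 1) (hx : (a, s, b) ∈ edgeIndex n) :
    vertexEdgeDist (cactusChain n 4 2) (vertex n y) (edge n (a, s, b)) =
      min (SimpleGraph.levelDist level (3 * a + 1 + 2 * s) y)
        (SimpleGraph.levelDist level (3 * (a + b) - 1) y) := by
  rw [mem_edgeIndex] at hx
  simp only [edge, vertexEdgeDist, Sym2.lift_mk, side, cut]
  rw [dist_vertex (by omega) hy, dist_vertex (by omega) hy]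

lemma levelDist_cut_cut (c c' : ℕ) :
    SimpleGraph.levelDist level (3 * c - 1) (3 * c' - 1) = Nat.dist (2 * c) (2 * c') := by
  unfold SimpleGraph.levelDist Nat.dist
  rw [level_cut, level_cut]
  split_ifs <;> omega

lemma levelDist_side_cut (a c : ℕ) {s : ℕ} (hs : s ≤ 1) :
    SimpleGraph.levelDist level (3 * a + 1 + 2 * s) (3 * c - 1) = Nat.dist (2 * a + 1) (2 * c) := by
  unfold SimpleGraph.levelDist
  rw [level_side a hs, level_cut]
  split_ifs <;> omega

lemma levelDist_cut_side (a c : ℕ) {s : ℕ} (hs : s ≤ 1) :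
    SimpleGraph.levelDist level (3 * c - 1) (3 * a + 1 + 2 * s) = Nat.dist (2 * c) (2 * a + 1) := by
  unfold SimpleGraph.levelDist
  rw [level_side a hs, level_cut]
  split_ifs <;> omega

lemma levelDist_side_side (a a' : ℕ) {s s' : ℕ} (hs : s ≤ 1) (hs' : s' ≤ 1) :
    SimpleGraph.levelDist level (3 * a + 1 + 2 * s) (3 * a' + 1 + 2 * s') =
      if a = a' then (if s = s' then 0 else 2) else Nat.dist (2 * a + 1) (2 * a' + 1) := by
  unfold SimpleGraph.levelDist
  rw [level_side a hs, level_side a' hs']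
  split_ifs <;> omega

lemma cut_closer_iff {j t b : ℕ} (hj : j < n) (ht : t ≤ 1) (hb : b ≤ 1) {x : ℕ × ℕ × ℕ}
    (hx : x ∈ edgeIndex n) :
    vertexEdgeDist (cactusChain n 4 2) (cut n (j + b)) (edge n x) <
        vertexEdgeDist (cactusChain n 4 2) (side n j t) (edge n x) ↔
      (if b = 0 then x.1 < j else j < x.1) ∨ (x.1 = j ∧ x.2 = (1 - t, b)) := by
  obtain ⟨a, s, c⟩ := x
  rw [side, cut, vertexEdgeDist_edge (by omega) hx, vertexEdgeDist_edge (by omega) hx]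
  rw [mem_edgeIndex] at hx
  rw [levelDist_side_cut _ _ hx.2.1, levelDist_cut_cut, levelDist_side_side _ _ hx.2.1 ht,
    levelDist_cut_side _ _ ht, Prod.mk.injEq]
  unfold Nat.dist
  split_ifs <;> omega

lemma side_closer_iff {j t b : ℕ} (hj : j < n) (ht : t ≤ 1) (hb : b ≤ 1) {x : ℕ × ℕ × ℕ}
    (hx : x ∈ edgeIndex n) :
    vertexEdgeDist (cactusChain n 4 2) (side n j t) (edge n x) <
        vertexEdgeDist (cactusChain n 4 2) (cut n (j + b)) (edge n x) ↔
      (if b = 0 then j < x.1 else x.1 < j) ∨ (x.1 = j ∧ x.2 = (t, 1 - b)) := by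
  obtain ⟨a, s, c⟩ := x
  rw [side, cut, vertexEdgeDist_edge (by omega) hx, vertexEdgeDist_edge (by omega) hx]
  rw [mem_edgeIndex] at hx
  rw [levelDist_side_cut _ _ hx.2.1, levelDist_cut_cut, levelDist_side_side _ _ hx.2.1 ht,
    levelDist_cut_side _ _ ht, Prod.mk.injEq]
  unfold Nat.dist
  split_ifs <;> omega

lemma card_filter_edgeIndex (P : ℕ → Prop) [DecidablePred P] {j : ℕ} (hj : j < n) (hPj : ¬P j)
    {y : ℕ × ℕ} (hy : y.1 ≤ 1 ∧ y.2 ≤ 1) :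
    #((edgeIndex n).filter fun x => P x.1 ∨ (x.1 = j ∧ x.2 = y)) =
      4 * #((range n).filter P) + 1 := by
  have hfilter : (edgeIndex n).filter (fun x => P x.1 ∨ (x.1 = j ∧ x.2 = y)) =
      insert (j, y) ((range n).filter P ×ˢ range 2 ×ˢ range 2) := by
    ext ⟨a, s, c⟩
    obtain ⟨y₁, y₂⟩ := y
    simp only [edgeIndex, mem_filter, mem_insert, mem_product, mem_range, Prod.mk.injEq]
    by_cases hP : P a
    · have : a ≠ j := by rintro rfl; exact hPj hP
      simp [hP, this]
    · simp only [hP, false_or, and_false, false_and, or_false]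
      omega
  rw [hfilter, card_insert_of_notMem (by simp [hPj]), card_product, card_product, card_range]
  ring

lemma edgeCloserCount_cut_side {j t b : ℕ} (hj : j < n) (ht : t ≤ 1) (hb : b ≤ 1) :
    edgeCloserCount (cactusChain n 4 2) (cut n (j + b)) (side n j t) =
      4 * #((range n).filter fun a => if b = 0 then a < j else j < a) + 1 := by
  rw [edgeCloserCount, edgeSet_eq, Nat.card_mem_image_and_eq_card_filter edge_injOn,
    filter_congr fun x hx => cut_closer_iff hj ht hb hx]
  refine card_filter_edgeIndex (fun a => if b = 0 then a < j else j < a) hj ?_ ?_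
  · split_ifs <;> omega
  · exact ⟨by omega, hb⟩

lemma edgeCloserCount_side_cut {j t b : ℕ} (hj : j < n) (ht : t ≤ 1) (hb : b ≤ 1) :
    edgeCloserCount (cactusChain n 4 2) (side n j t) (cut n (j + b)) =
      4 * #((range n).filter fun a => if b = 0 then j < a else a < j) + 1 := by
  rw [edgeCloserCount, edgeSet_eq, Nat.card_mem_image_and_eq_card_filter edge_injOn,
    filter_congr fun x hx => side_closer_iff hj ht hb hx]
  refine card_filter_edgeIndex (fun a => if b = 0 then j < a else a < j) hj ?_ ?_
  · split_ifs <;> omega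
  · exact ⟨ht, by omega⟩

lemma card_filter_range_lt {j : ℕ} (hj : j < n) : #((range n).filter (· < j)) = j := by
  rw [show (range n).filter (· < j) = range j by ext; simp only [mem_filter, mem_range]; omega,
    card_range]

lemma card_filter_range_gt {j : ℕ} : #((range n).filter (j < ·)) = n - 1 - j := by
  rw [show (range n).filter (j < ·) = Ico (j + 1) n by
      ext; simp only [mem_filter, mem_range, mem_Ico]; omega,
    Nat.card_Ico]
  omega

lemma emostarTerm_edge {x : ℕ × ℕ × ℕ} (hx : x ∈ edgeIndex n) :
    emostarTerm (cactusChain n 4 2) (edge n x) = 4 * Nat.dist x.1 (n - 1 - x.1) := by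
  obtain ⟨j, t, b⟩ := x
  rw [mem_edgeIndex] at hx
  obtain ⟨hj, ht, hb⟩ := hx
  simp only [edge, emostarTerm, Sym2.lift_mk]
  rw [edgeCloserCount_side_cut hj ht hb, edgeCloserCount_cut_side hj ht hb]
  interval_cases b <;>
    simp only [↓reduceIte, one_ne_zero, card_filter_range_lt hj, card_filter_range_gt,
      Nat.dist] <;>
    omega

lemma sum_range_dist_reflect (n : ℕ) : ∑ a ∈ range n, Nat.dist a (n - 1 - a) = n ^ 2 / 2 := by
  induction n using Nat.twoStepInduction with
  | zero => rfl
  | one => rfl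
  | more m ih _ =>
    rw [sum_range_succ, sum_range_succ', sum_congr rfl fun a ha => ?_, ih]
    · have : (m + 2) ^ 2 = m ^ 2 + 2 * (2 * m + 2) := by ring
      unfold Nat.dist
      omega
    · rw [mem_range] at ha
      unfold Nat.dist
      omega

theorem emostar_eq (n : ℕ) : emostar (cactusChain n 4 2) = 16 * (n ^ 2 / 2) := by
  rw [SimpleGraph.emostar_eq_sum_of_edgeSet_eq_image edgeSet_eq edge_injOn,
    sum_congr rfl fun x hx => emostarTerm_edge hx, edgeIndex, sum_product,
    ← sum_range_dist_reflect, mul_sum]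
  refine sum_congr rfl fun a _ => ?_
  simp only [sum_const, card_product, card_range, smul_eq_mul]
  ring

end ParaSquare

theorem emostar_paraSquare_general (k : ℕ) :
    emostar (cactusChain (2 * k) 4 2) = 32 * k ^ 2 ∧
    emostar (cactusChain (2 * k + 1) 4 2) = 32 * k ^ 2 + 32 * k := by
  rw [ParaSquare.emostar_eq, ParaSquare.emostar_eq, show (2 * k) ^ 2 = 2 * (2 * k ^ 2) by ring,
    show (2 * k + 1) ^ 2 = 2 * (2 * k ^ 2 + 2 * k) + 1 by ring]
  omega

theorem emostar_paraSquare (k : ℕ) (hk : 1 ≤ k) :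
    emostar (cactusChain (2 * k) 4 2) = 32 * k ^ 2 ∧
    emostar (cactusChain (2 * k + 1) 4 2) = 32 * k ^ 2 + 32 * k :=
  emostar_paraSquare_general k
end
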